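/- arXiv:2312.07313 — 4 statements merged into one kernel-verified Lean document; each statement's English description precedes it below -/
import Mathlib

section
/- Define q(s) = 1/(8s²(1−s²)) − atanh(s)/(8s³) for s ∈ (0,1), and for β > 0 define ĝ_β(t) = atanh(t)/(2t) − 2β t² for t ∈ [−1,1]∖{0}, extended by ĝ_β(0) = 1/2. Then: (a) q is strictly increasing on (0,1), with lim_{s→0+} q(s) = 1/12 and lim_{s→1−} q(s) = +∞; (b) if β ≤ 1/12, then 0 is the unique critical point of ĝ_β and it is the global minimizer of ĝ_β on [−1,1]; (c) if β > 1/12, then ĝ_β has a local maximum at 0 and exactly two global minimizers s_− < 0 < s_+ with s_− = −s_+, characterized by q(s_±) = β (interpreting q as an even function). -/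
open Filter
open Set Topology


private lemma fs_aux_le {f f' : ℝ → ℝ} {b : ℝ}
    (hd : ∀ x ∈ Set.Ico (0:ℝ) b, HasDerivAt f (f' x) x)
    (h0 : ∀ x ∈ Set.Ioo (0:ℝ) b, 0 ≤ f' x) :
    ∀ x ∈ Set.Ico (0:ℝ) b, f 0 ≤ f x := by
  intro x hx
  have hm : MonotoneOn f (Set.Ico 0 b) := by
    apply monotoneOn_of_deriv_nonneg (convex_Ico 0 b)
    · exact fun y hy => (hd y hy).continuousAt.continuousWithinAt
    · intro y hy
      rw [interior_Ico] at hy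
      exact ((hd y (Set.Ioo_subset_Ico_self hy)).differentiableAt).differentiableWithinAt
    · intro y hy
      rw [interior_Ico] at hy
      rw [(hd y (Set.Ioo_subset_Ico_self hy)).deriv]
      exact h0 y hy
  exact hm ⟨le_refl 0, lt_of_le_of_lt hx.1 hx.2⟩ hx hx.1

private lemma fs_aux_lt {f f' : ℝ → ℝ} {b : ℝ}
    (hd : ∀ x ∈ Set.Ico (0:ℝ) b, HasDerivAt f (f' x) x)
    (h0 : ∀ x ∈ Set.Ioo (0:ℝ) b, 0 < f' x) :
    ∀ x ∈ Set.Ioo (0:ℝ) b, f 0 < f x := by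
  intro x hx
  have hm : StrictMonoOn f (Set.Ico 0 b) := by
    apply strictMonoOn_of_deriv_pos (convex_Ico 0 b)
    · exact fun y hy => (hd y hy).continuousAt.continuousWithinAt
    · intro y hy
      rw [interior_Ico] at hy
      rw [(hd y (Set.Ioo_subset_Ico_self hy)).deriv]
      exact h0 y hy
  exact hm ⟨le_refl 0, lt_trans hx.1 hx.2⟩ ⟨le_of_lt hx.1, hx.2⟩ hx.1

private lemma fs_atanh_odd (atanh : ℝ → ℝ)
    (hatanh : ∀ t, atanh t = Real.log ((1 + t) / (1 - t)) / 2) (t : ℝ) :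
    atanh (-t) = - atanh t := by
  rw [hatanh, hatanh]
  have h : (1 + -t) / (1 - -t) = ((1 + t) / (1 - t))⁻¹ := by
    rw [inv_div]; ring_nf
  rw [h, Real.log_inv]; ring

private lemma fs_atanh_zero (atanh : ℝ → ℝ)
    (hatanh : ∀ t, atanh t = Real.log ((1 + t) / (1 - t)) / 2) :
    atanh 0 = 0 := by rw [hatanh]; norm_num

private lemma fs_hasDerivAt_atanh (atanh : ℝ → ℝ)
    (hatanh : ∀ t, atanh t = Real.log ((1 + t) / (1 - t)) / 2)
    {t : ℝ} (h1 : -1 < t) (h2 : t < 1) :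
    HasDerivAt atanh (1 / (1 - t^2)) t := by
  have h1t : (0:ℝ) < 1 + t := by linarith
  have h2t : (0:ℝ) < 1 - t := by linarith
  have d1 : HasDerivAt (fun x : ℝ => Real.log (1 + x)) (1/(1+t)) t := by
    have := (Real.hasDerivAt_log (ne_of_gt h1t)).comp t ((hasDerivAt_id t).const_add 1)
    refine this.congr_deriv ?_; ring
  have d2 : HasDerivAt (fun x : ℝ => Real.log (1 - x)) (-(1/(1-t))) t := by
    have := (Real.hasDerivAt_log (ne_of_gt h2t)).comp t ((hasDerivAt_id t).const_sub 1)
    refine this.congr_deriv ?_; ring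
  have hd : HasDerivAt (fun x : ℝ => (Real.log (1+x) - Real.log (1-x))/2)
      (1/(1-t^2)) t := by
    have := (d1.sub d2).div_const 2
    have hne : (1:ℝ) - t^2 ≠ 0 := by nlinarith
    have hne1 : (1:ℝ) + t ≠ 0 := ne_of_gt h1t
    have hne2 : (1:ℝ) - t ≠ 0 := ne_of_gt h2t
    refine this.congr_deriv ?_
    field_simp
    ring
  apply hd.congr_of_eventuallyEq
  have hmem : Set.Ioo (-1:ℝ) 1 ∈ 𝓝 t := isOpen_Ioo.mem_nhds ⟨h1, h2⟩
  filter_upwards [hmem] with x hx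
  have hx1 : (0:ℝ) < 1 + x := by linarith [hx.1]
  have hx2 : (0:ℝ) < 1 - x := by linarith [hx.2]
  rw [hatanh, Real.log_div (ne_of_gt hx1) (ne_of_gt hx2)]


private lemma fs_hasDerivAt_F (atanh : ℝ → ℝ)
    (hatanh : ∀ t, atanh t = Real.log ((1 + t) / (1 - t)) / 2)
    {s : ℝ} (h1 : -1 < s) (h2 : s < 1) :
    HasDerivAt (fun x => x/(1-x^2) - atanh x) (2*s^2/(1-s^2)^2) s := by
  have hne : (1:ℝ) - s^2 ≠ 0 := by nlinarith
  have d1 := (hasDerivAt_id s).div ((hasDerivAt_pow 2 s).const_sub 1) hne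
  have := d1.sub (fs_hasDerivAt_atanh atanh hatanh h1 h2)
  refine this.congr_deriv ?_
  simp only [id_eq]
  push_cast
  field_simp
  ring

private lemma fs_F_lb (atanh : ℝ → ℝ)
    (hatanh : ∀ t, atanh t = Real.log ((1 + t) / (1 - t)) / 2) :
    ∀ s ∈ Set.Ioo (0:ℝ) 1, 2/3*s^3 < s/(1-s^2) - atanh s := by
  have key := fs_aux_lt (f := fun x => (x/(1-x^2) - atanh x) - 2/3*x^3)
    (f' := fun x => 2*x^2/(1-x^2)^2 - 2*x^2) (b := 1)
    (by
      intro x hx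
      obtain ⟨hx0, hx1⟩ := hx
      have h1 : (-1:ℝ) < x := by linarith
      have := (fs_hasDerivAt_F atanh hatanh h1 hx1).sub
        ((hasDerivAt_pow 3 x).const_mul (2/3:ℝ))
      refine this.congr_deriv ?_
      push_cast; ring)
    (by
      intro x hx
      obtain ⟨hx0, hx1⟩ := hx
      have h2 : (0:ℝ) < 1-x^2 := by nlinarith
      have hne : (0:ℝ) < (1-x^2)^2 := by positivity
      show (0:ℝ) < 2*x^2/(1-x^2)^2 - 2*x^2
      have hkey : 2*x^2/(1-x^2)^2 - 2*x^2
          = 2*x^2*(1-(1-x^2)^2)/(1-x^2)^2 := by field_simp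
      rw [hkey]
      apply div_pos _ hne
      nlinarith [mul_pos (pow_pos hx0 4) (show (0:ℝ) < 2 - x^2 by nlinarith)])
  intro s hs
  have := key s hs
  simp only [fs_atanh_zero atanh hatanh] at this
  norm_num at this
  linarith

private lemma fs_F_ub (atanh : ℝ → ℝ)
    (hatanh : ∀ t, atanh t = Real.log ((1 + t) / (1 - t)) / 2) :
    ∀ s ∈ Set.Ico (0:ℝ) 1, s/(1-s^2) - atanh s ≤ 2/3*s^3/(1-s^2)^2 := by
  have key := fs_aux_le (f := fun x => 2/3*x^3/(1-x^2)^2 - (x/(1-x^2) - atanh x))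
    (f' := fun x => 8/3*x^4/(1-x^2)^3) (b := 1)
    (by
      intro x hx
      obtain ⟨hx0, hx1⟩ := hx
      have h1 : (-1:ℝ) < x := by linarith
      have hne : (1:ℝ) - x^2 ≠ 0 := by nlinarith
      have hne2 : ((1:ℝ) - x^2)^2 ≠ 0 := pow_ne_zero 2 hne
      have d1 := ((hasDerivAt_pow 3 x).const_mul (2/3:ℝ)).div
        (((hasDerivAt_pow 2 x).const_sub 1).pow 2) hne2
      have := d1.sub (fs_hasDerivAt_F atanh hatanh h1 hx1)
      refine this.congr_deriv ?_
      simp only [Pi.pow_apply]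
      push_cast
      field_simp
      ring)
    (by
      intro x hx
      obtain ⟨hx0, hx1⟩ := hx
      have h2 : (0:ℝ) < 1-x^2 := by nlinarith
      show (0:ℝ) ≤ 8/3*x^4/(1-x^2)^3
      positivity)
  intro s hs
  have := key s hs
  simp only [fs_atanh_zero atanh hatanh] at this
  norm_num at this
  linarith

private lemma fs_G_pos (atanh : ℝ → ℝ)
    (hatanh : ∀ t, atanh t = Real.log ((1 + t) / (1 - t)) / 2) :
    ∀ s ∈ Set.Ioo (0:ℝ) 1, 3*(s/(1-s^2) - atanh s) < 2*s^3/(1-s^2)^2 := by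
  have key := fs_aux_lt (f := fun x => 2*x^3/(1-x^2)^2 - 3*(x/(1-x^2) - atanh x))
    (f' := fun x => 8*x^4/(1-x^2)^3) (b := 1)
    (by
      intro x hx
      obtain ⟨hx0, hx1⟩ := hx
      have h1 : (-1:ℝ) < x := by linarith
      have hne : (1:ℝ) - x^2 ≠ 0 := by nlinarith
      have hne2 : ((1:ℝ) - x^2)^2 ≠ 0 := pow_ne_zero 2 hne
      have d1 := ((hasDerivAt_pow 3 x).const_mul (2:ℝ)).div
        (((hasDerivAt_pow 2 x).const_sub 1).pow 2) hne2
      have := d1.sub ((fs_hasDerivAt_F atanh hatanh h1 hx1).const_mul 3)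
      refine this.congr_deriv ?_
      simp only [Pi.pow_apply]
      push_cast
      field_simp
      ring)
    (by
      intro x hx
      obtain ⟨hx0, hx1⟩ := hx
      have h2 : (0:ℝ) < 1-x^2 := by nlinarith
      show (0:ℝ) < 8*x^4/(1-x^2)^3
      positivity)
  intro s hs
  have := key s hs
  simp only [fs_atanh_zero atanh hatanh] at this
  norm_num at this
  linarith

private lemma fs_A_lb (atanh : ℝ → ℝ)
    (hatanh : ∀ t, atanh t = Real.log ((1 + t) / (1 - t)) / 2) :
    ∀ t ∈ Set.Ico (0:ℝ) 1, t^3/3 ≤ atanh t - t := by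
  have key := fs_aux_le (f := fun x => (atanh x - x) - x^3/3)
    (f' := fun x => 1/(1-x^2) - 1 - x^2) (b := 1)
    (by
      intro x hx
      obtain ⟨hx0, hx1⟩ := hx
      have h1 : (-1:ℝ) < x := by linarith
      have := ((fs_hasDerivAt_atanh atanh hatanh h1 hx1).sub (hasDerivAt_id x)).sub
        ((hasDerivAt_pow 3 x).div_const 3)
      refine this.congr_deriv ?_
      push_cast; ring)
    (by
      intro x hx
      obtain ⟨hx0, hx1⟩ := hx
      have h2 : (0:ℝ) < 1-x^2 := by nlinarith
      show (0:ℝ) ≤ 1/(1-x^2) - 1 - x^2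
      have hkey : 1/(1-x^2) - 1 - x^2 = x^4/(1-x^2) := by field_simp; ring
      rw [hkey]; positivity)
  intro t ht
  have := key t ht
  simp only [fs_atanh_zero atanh hatanh] at this
  norm_num at this
  linarith

private lemma fs_A_ub (atanh : ℝ → ℝ)
    (hatanh : ∀ t, atanh t = Real.log ((1 + t) / (1 - t)) / 2) :
    ∀ t ∈ Set.Ico (0:ℝ) 1, atanh t - t ≤ t^3/(3*(1-t^2)) := by
  have key := fs_aux_le (f := fun x => x^3/(3*(1-x^2)) - (atanh x - x))
    (f' := fun x => 2*x^4/(3*(1-x^2)^2)) (b := 1)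
    (by
      intro x hx
      obtain ⟨hx0, hx1⟩ := hx
      have h1 : (-1:ℝ) < x := by linarith
      have hne : (1:ℝ) - x^2 ≠ 0 := by nlinarith
      have hne2 : (3:ℝ)*(1 - x^2) ≠ 0 := by
        intro h; apply hne; linarith
      have d1 := (hasDerivAt_pow 3 x).div
        (((hasDerivAt_pow 2 x).const_sub 1).const_mul (3:ℝ)) hne2
      have := d1.sub ((fs_hasDerivAt_atanh atanh hatanh h1 hx1).sub (hasDerivAt_id x))
      refine this.congr_deriv ?_
      push_cast
      field_simp
      ring)
    (by
      intro x hx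
      obtain ⟨hx0, hx1⟩ := hx
      have h2 : (0:ℝ) < 1-x^2 := by nlinarith
      show (0:ℝ) ≤ 2*x^4/(3*(1-x^2)^2)
      positivity)
  intro t ht
  have := key t ht
  simp only [fs_atanh_zero atanh hatanh] at this
  norm_num at this
  linarith

section qlemmas
variable (atanh : ℝ → ℝ) (hatanh : ∀ t, atanh t = Real.log ((1 + t) / (1 - t)) / 2)
  (q : ℝ → ℝ) (hq : ∀ s, q s = 1 / (8 * s ^ 2 * (1 - s ^ 2)) - atanh s / (8 * s ^ 3))

include hatanh hq

private lemma fs_q_even (t : ℝ) : q (-t) = q t := by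
  rw [hq, hq, fs_atanh_odd atanh hatanh]
  ring

private lemma fs_q_eq {s : ℝ} (hs : s ∈ Set.Ioo (0:ℝ) 1) :
    q s = (s/(1-s^2) - atanh s)/(8*s^3) := by
  obtain ⟨hs0, hs1⟩ := hs
  have hne : s ≠ 0 := ne_of_gt hs0
  have hne2 : (1:ℝ) - s^2 ≠ 0 := by nlinarith
  rw [hq]
  field_simp

private lemma fs_hasDerivAt_q {s : ℝ} (hs : s ∈ Set.Ioo (0:ℝ) 1) :
    HasDerivAt q ((2*s^3/(1-s^2)^2 - 3*(s/(1-s^2) - atanh s))/(8*s^4)) s := by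
  obtain ⟨hs0, hs1⟩ := hs
  have hne : s ≠ 0 := ne_of_gt hs0
  have hne2 : (1:ℝ) - s^2 ≠ 0 := by nlinarith
  have hne3 : (8:ℝ)*s^3 ≠ 0 := by positivity
  have d1 := (fs_hasDerivAt_F atanh hatanh (by linarith) hs1).div
    ((hasDerivAt_pow 3 s).const_mul (8:ℝ)) hne3
  have hd : HasDerivAt (fun x => (x/(1-x^2) - atanh x)/(8*x^3))
      ((2*s^3/(1-s^2)^2 - 3*(s/(1-s^2) - atanh s))/(8*s^4)) s := by
    refine d1.congr_deriv ?_
    push_cast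
    field_simp
  apply hd.congr_of_eventuallyEq
  filter_upwards [isOpen_Ioo.mem_nhds (⟨hs0, hs1⟩ : s ∈ Set.Ioo (0:ℝ) 1)] with x hx
  exact fs_q_eq atanh hatanh q hq hx

private lemma fs_q_mono : StrictMonoOn q (Set.Ioo (0:ℝ) 1) := by
  apply strictMonoOn_of_deriv_pos (convex_Ioo 0 1)
  · exact fun y hy => (fs_hasDerivAt_q atanh hatanh q hq hy).continuousAt.continuousWithinAt
  · intro y hy
    rw [interior_Ioo] at hy
    rw [(fs_hasDerivAt_q atanh hatanh q hq hy).deriv]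
    apply div_pos
    · linarith [fs_G_pos atanh hatanh y hy]
    · have := hy.1; positivity

private lemma fs_q_gt : ∀ s ∈ Set.Ioo (0:ℝ) 1, 1/12 < q s := by
  intro s hs
  obtain ⟨hs0, hs1⟩ := hs
  rw [fs_q_eq atanh hatanh q hq ⟨hs0, hs1⟩, lt_div_iff₀ (by positivity : (0:ℝ) < 8*s^3)]
  linarith [fs_F_lb atanh hatanh s ⟨hs0, hs1⟩]

private lemma fs_q_le : ∀ s ∈ Set.Ioo (0:ℝ) 1, q s ≤ 1/(12*(1-s^2)^2) := by
  intro s hs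
  obtain ⟨hs0, hs1⟩ := hs
  have hne2 : (1:ℝ) - s^2 ≠ 0 := by nlinarith
  rw [fs_q_eq atanh hatanh q hq ⟨hs0, hs1⟩, div_le_iff₀ (by positivity : (0:ℝ) < 8*s^3)]
  have heq : (1:ℝ)/(12*(1-s^2)^2)*(8*s^3) = 2/3*s^3/(1-s^2)^2 := by
    field_simp; ring
  rw [heq]
  exact fs_F_ub atanh hatanh s ⟨le_of_lt hs0, hs1⟩

private lemma fs_q_tendsto0 :
    Tendsto q (nhdsWithin 0 (Set.Ioi 0)) (nhds (1/12)) := by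
  have hub : Tendsto (fun s:ℝ => 1/(12*(1-s^2)^2)) (nhdsWithin 0 (Set.Ioi 0)) (nhds (1/12)) := by
    have hc : ContinuousAt (fun s:ℝ => 1/(12*(1-s^2)^2)) 0 := by
      apply ContinuousAt.div continuousAt_const (by fun_prop) (by norm_num)
    have h0 := hc.tendsto
    have h0' : Tendsto (fun s:ℝ => 1/(12*(1-s^2)^2)) (nhds 0) (nhds (1/12)) := by
      convert h0 using 2 <;> norm_num
    exact h0'.mono_left nhdsWithin_le_nhds
  have hmem : Set.Ioo (0:ℝ) 1 ∈ nhdsWithin (0:ℝ) (Set.Ioi 0) :=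
    Ioo_mem_nhdsGT_of_mem ⟨le_refl 0, zero_lt_one⟩
  apply tendsto_of_tendsto_of_tendsto_of_le_of_le' tendsto_const_nhds hub
  · filter_upwards [hmem] with s hs
    exact (fs_q_gt atanh hatanh q hq s hs).le
  · filter_upwards [hmem] with s hs
    exact fs_q_le atanh hatanh q hq s hs

private lemma fs_q_tendsto1 :
    Tendsto q (nhdsWithin 1 (Set.Iio 1)) atTop := by
  have hlog : Tendsto (fun x : ℝ => Real.log x * x) (nhdsWithin 0 (Set.Ioi 0)) (nhds 0) := by
    have := tendsto_log_mul_rpow_nhdsGT_zero (r := 1) one_pos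
    simpa [Real.rpow_one] using this
  have h14 : Tendsto (fun x:ℝ => 1/4 + 1/2*(Real.log x * x)) (nhdsWithin 0 (Set.Ioi 0))
      (nhds (1/4)) := by
    have := (hlog.const_mul (1/2:ℝ)).const_add (1/4:ℝ)
    simpa using this
  have hmul : Tendsto (fun x:ℝ => (1/4 + 1/2*(Real.log x * x)) * x⁻¹)
      (nhdsWithin 0 (Set.Ioi 0)) atTop :=
    h14.pos_mul_atTop (by norm_num) tendsto_inv_nhdsGT_zero
  have hφ : Tendsto (fun x:ℝ => (1/(4*x) + Real.log x/2 - Real.log 2/2)/8)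
      (nhdsWithin 0 (Set.Ioi 0)) atTop := by
    apply Tendsto.atTop_div_const (by norm_num : (0:ℝ) < 8)
    apply Tendsto.congr' _ (tendsto_atTop_add_const_right _ (-(Real.log 2/2)) hmul)
    · filter_upwards [self_mem_nhdsWithin] with x hx
      have hx0 : (0:ℝ) < x := hx
      field_simp
      ring
  have hsub : Tendsto (fun s:ℝ => 1-s) (nhdsWithin 1 (Set.Iio 1)) (nhdsWithin 0 (Set.Ioi 0)) := by
    have h1 : Tendsto (fun s:ℝ => 1-s) (nhds 1) (nhds 0) := by
      have hc : Continuous (fun s:ℝ => 1-s) := by fun_prop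
      have := hc.tendsto (1:ℝ)
      simpa using this
    have h2 : ∀ᶠ s in nhdsWithin (1:ℝ) (Set.Iio 1), (1:ℝ)-s ∈ Set.Ioi (0:ℝ) := by
      filter_upwards [self_mem_nhdsWithin] with s hs
      simpa using sub_pos.2 (mem_Iio.1 hs)
    exact tendsto_nhdsWithin_of_tendsto_nhds_of_eventually_within _
      (h1.mono_left nhdsWithin_le_nhds) h2
  have hℓ := hφ.comp hsub
  apply tendsto_atTop_mono' _ _ hℓ
  have hmem : Set.Ioo (1/2:ℝ) 1 ∈ nhdsWithin (1:ℝ) (Set.Iio 1) :=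
    Ioo_mem_nhdsLT_of_mem ⟨by norm_num, le_refl 1⟩
  filter_upwards [hmem] with s hs
  obtain ⟨hs0, hs1⟩ := hs
  have hs0' : (0:ℝ) < s := by linarith
  have h1s : (0:ℝ) < 1 - s := by linarith
  have h1p : (0:ℝ) < 1 + s := by linarith
  have hne2 : (0:ℝ) < 1 - s^2 := by nlinarith
  have hFlb := fs_F_lb atanh hatanh s ⟨hs0', hs1⟩
  have hF_pos : 0 < s/(1-s^2) - atanh s := by nlinarith
  -- F lower bound
  have part1 : 1/(4*(1-s)) ≤ s/(1-s^2) := by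
    rw [div_le_div_iff₀ (by linarith) hne2]
    nlinarith [mul_nonneg (by linarith : (0:ℝ) ≤ 1-s) (by linarith : (0:ℝ) ≤ 3*s-1)]
  have part2 : atanh s ≤ Real.log 2/2 - Real.log (1-s)/2 := by
    rw [hatanh, Real.log_div (by linarith) (by linarith)]
    have : Real.log (1+s) ≤ Real.log 2 :=
      (Real.log_le_log_iff (by linarith) (by norm_num)).2 (by linarith)
    linarith
  have hFb : 1/(4*(1-s)) + Real.log (1-s)/2 - Real.log 2/2 ≤ s/(1-s^2) - atanh s := by
    linarith
  -- q s ≥ F/8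
  have hq8 : (s/(1-s^2) - atanh s)/8 ≤ q s := by
    rw [fs_q_eq atanh hatanh q hq ⟨hs0', hs1⟩]
    rw [div_le_div_iff₀ (by norm_num) (by positivity)]
    nlinarith [pow_le_one₀ (le_of_lt hs0') (le_of_lt hs1) (n := 3)]
  calc (fun x:ℝ => (1/(4*x) + Real.log x/2 - Real.log 2/2)/8) ((fun s:ℝ => 1-s) s)
      ≤ (s/(1-s^2) - atanh s)/8 := by
        simp only
        apply div_le_div_of_nonneg_right ?_ (by norm_num)
        · exact hFb
    _ ≤ q s := hq8

end qlemmas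

section glemmas
variable (atanh : ℝ → ℝ) (hatanh : ∀ t, atanh t = Real.log ((1 + t) / (1 - t)) / 2)
  (q : ℝ → ℝ) (hq : ∀ s, q s = 1 / (8 * s ^ 2 * (1 - s ^ 2)) - atanh s / (8 * s ^ 3))
  (ghat : ℝ → ℝ → ℝ)
  (hghat : ∀ β t, ghat β t = if t = 0 then 1 / 2 else atanh t / (2 * t) - 2 * β * t ^ 2)
  (β : ℝ)

include hghat

private lemma fs_g_zero : ghat β 0 = 1/2 := by rw [hghat]; simp

private lemma fs_g_ne {t : ℝ} (ht : t ≠ 0) :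
    ghat β t = atanh t / (2 * t) - 2 * β * t ^ 2 := by rw [hghat, if_neg ht]

include hatanh

private lemma fs_g_even (t : ℝ) : ghat β (-t) = ghat β t := by
  rw [hghat, hghat]
  by_cases h : t = 0
  · simp [h]
  · rw [if_neg (by simpa using h), if_neg h, fs_atanh_odd atanh hatanh]
    field_simp

include hq

private lemma fs_g_hasDeriv_ne {t : ℝ} (ht1 : -1 < t) (ht2 : t < 1) (htne : t ≠ 0) :
    HasDerivAt (ghat β) (4*t*(q t - β)) t := by
  have hne2 : (1:ℝ) - t^2 ≠ 0 := by nlinarith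
  have h2t : (2:ℝ)*t ≠ 0 := by simpa using htne
  have dden : HasDerivAt (fun x:ℝ => 2*x) 2 t := by
    simpa using (hasDerivAt_id t).const_mul (2:ℝ)
  have d1 := (fs_hasDerivAt_atanh atanh hatanh ht1 ht2).div dden h2t
  have d2 : HasDerivAt (fun x:ℝ => 2*β*x^2) (2*β*(2*t)) t := by
    have := (hasDerivAt_pow 2 t).const_mul (2*β)
    norm_num at this
    exact this
  have hd' : HasDerivAt (fun x:ℝ => atanh x/(2*x) - 2*β*x^2) (4*t*(q t - β)) t := by
    refine (d1.sub d2).congr_deriv ?_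
    rw [hq]
    field_simp
    ring
  apply hd'.congr_of_eventuallyEq
  filter_upwards [isOpen_ne.mem_nhds htne] with x hx
  exact fs_g_ne atanh ghat hghat β hx

private lemma fs_g_deriv0 (hβ : 0 < β) : HasDerivAt (ghat β) 0 0 := by
  have key : ∀ t:ℝ, 0 ≤ t → t ≤ 1/2 → |ghat β t - 1/2| ≤ (2/9+2*β)*t^2 := by
    intro t ht0 ht2
    rcases eq_or_lt_of_le ht0 with h|h
    · rw [hghat]
      simp [← h]
    · have htne : t ≠ 0 := ne_of_gt h
      have ht1 : t < 1 := by linarith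
      have hA1 := fs_A_lb atanh hatanh t ⟨ht0, ht1⟩
      have hA2 := fs_A_ub atanh hatanh t ⟨ht0, ht1⟩
      have hne : (0:ℝ) < 1 - t^2 := by nlinarith
      rw [fs_g_ne atanh ghat hghat β htne]
      have heq : atanh t/(2*t) - 2*β*t^2 - 1/2 = (atanh t - t)/(2*t) - 2*β*t^2 := by
        field_simp
        ring
      rw [heq]
      have hub : (atanh t - t)/(2*t) ≤ 2/9*t^2 := by
        rw [div_le_iff₀ (by linarith : (0:ℝ) < 2*t)]
        have h2 : t^3/(3*(1-t^2)) ≤ 2/9*t^2*(2*t) := by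
          rw [div_le_iff₀ (by linarith : (0:ℝ) < 3*(1-t^2))]
          nlinarith [pow_nonneg ht0 3,
            mul_nonneg (pow_nonneg ht0 3) (show (0:ℝ) ≤ 1/3 - 4*t^2/3 by nlinarith)]
        linarith
      have hlb : 0 ≤ (atanh t - t)/(2*t) := div_nonneg (by nlinarith) (by linarith)
      rw [abs_le]
      constructor
      · nlinarith [sq_nonneg t, mul_nonneg (le_of_lt hβ) (sq_nonneg t)]
      · nlinarith [sq_nonneg t, mul_nonneg (le_of_lt hβ) (sq_nonneg t)]
  have key2 : ∀ t:ℝ, |t| ≤ 1/2 → |ghat β t - 1/2| ≤ (2/9+2*β)*t^2 := by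
    intro t ht
    rcases le_or_gt 0 t with h|h
    · exact key t h (by rwa [abs_of_nonneg h] at ht)
    · have h2 := key (-t) (by linarith) (by rwa [abs_of_neg h] at ht)
      rw [fs_g_even atanh hatanh ghat hghat β t] at h2
      simpa using h2
  rw [hasDerivAt_iff_isLittleO, Asymptotics.isLittleO_iff]
  intro c hc
  have hK : (0:ℝ) < 2/9 + 2*β := by linarith
  have hδ : (0:ℝ) < min (1/2) (c/(2/9+2*β)) := lt_min (by norm_num) (div_pos hc hK)
  filter_upwards [eventually_abs_sub_lt 0 hδ] with x hx
  rw [sub_zero] at hx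
  have hx1 : |x| ≤ 1/2 := le_of_lt (lt_of_lt_of_le hx (min_le_left _ _))
  have hx2 : |x| ≤ c/(2/9+2*β) := le_of_lt (lt_of_lt_of_le hx (min_le_right _ _))
  have hx2' : |x| * (2/9+2*β) ≤ c := (le_div_iff₀ hK).1 hx2
  have hb := key2 x hx1
  have h0 := fs_g_zero atanh ghat hghat β
  simp only [h0, sub_zero, smul_zero, Real.norm_eq_abs]
  have hxx : x^2 = |x| * |x| := by rw [← sq_abs]; ring
  nlinarith [abs_nonneg x, hb, abs_nonneg (ghat β x - 1/2)]

private lemma fs_g_localmax (hβ : 1/12 < β) : IsLocalMax (ghat β) 0 := by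
  have hβ0 : (0:ℝ) < β := by linarith
  have h12 : (0:ℝ) < 12*β := by linarith
  have hδ2 : (0:ℝ) < 1 - 1/(12*β) := by
    have : 1/(12*β) < 1 := by rw [div_lt_one h12]; linarith
    linarith
  have key : ∀ t:ℝ, 0 ≤ t → t^2 < 1 - 1/(12*β) → ghat β t ≤ 1/2 := by
    intro t ht0 htδ
    rcases eq_or_lt_of_le ht0 with h|h
    · rw [hghat]; simp [← h]
    · have hpos : (0:ℝ) < 1/(12*β) := by positivity
      have ht1 : t < 1 := by nlinarith [sq_nonneg (t-1)]
      have hne : (0:ℝ) < 1 - t^2 := by nlinarith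
      have hA2 := fs_A_ub atanh hatanh t ⟨ht0, ht1⟩
      rw [fs_g_ne atanh ghat hghat β (ne_of_gt h)]
      have hkey : atanh t/(2*t) - 1/2 = (atanh t - t)/(2*t) := by field_simp
      have h1t : 1/(12*β) < 1 - t^2 := by nlinarith
      have h3 : 1 < (1 - t^2)*(12*β) := (div_lt_iff₀ h12).1 h1t
      have hub : (atanh t - t)/(2*t) ≤ 2*β*t^2 := by
        rw [div_le_iff₀ (by linarith : (0:ℝ) < 2*t)]
        have h2 : t^3/(3*(1-t^2)) ≤ 2*β*t^2*(2*t) := by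
          rw [div_le_iff₀ (by linarith : (0:ℝ) < 3*(1-t^2))]
          have := mul_lt_mul_of_pos_left h3 (pow_pos h 3)
          nlinarith [this]
        linarith
      linarith
  have key2 : ∀ t:ℝ, t^2 < 1 - 1/(12*β) → ghat β t ≤ 1/2 := by
    intro t ht
    rcases le_or_gt 0 t with h|h
    · exact key t h ht
    · have h2 := key (-t) (by linarith) (by simpa using ht)
      rwa [fs_g_even atanh hatanh ghat hghat β t] at h2
  have hev : ∀ᶠ t in nhds (0:ℝ), t^2 < 1 - 1/(12*β) := by
    have hc : ContinuousAt (fun t:ℝ => t^2) 0 := by fun_prop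
    have h := hc.tendsto
    norm_num at h
    exact h.eventually_lt_const hδ2
  have h0 := fs_g_zero atanh ghat hghat β
  filter_upwards [hev] with t ht
  rw [h0]
  exact key2 t ht

end glemmas

section glemmas2
variable (atanh : ℝ → ℝ) (hatanh : ∀ t, atanh t = Real.log ((1 + t) / (1 - t)) / 2)
  (q : ℝ → ℝ) (hq : ∀ s, q s = 1 / (8 * s ^ 2 * (1 - s ^ 2)) - atanh s / (8 * s ^ 3))
  (ghat : ℝ → ℝ → ℝ)
  (hghat : ∀ β t, ghat β t = if t = 0 then 1 / 2 else atanh t / (2 * t) - 2 * β * t ^ 2)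
  (β : ℝ)

include hatanh hghat

private lemma fs_g_min_b (hβ0 : 0 < β) (hβ : β ≤ 1/12) :
    ∀ t ∈ Set.Ioo (-1:ℝ) 1, 1/2 ≤ ghat β t := by
  have key : ∀ t, 0 ≤ t → t < 1 → 1/2 ≤ ghat β t := by
    intro t ht0 ht1
    rcases eq_or_lt_of_le ht0 with h|h
    · rw [hghat]; simp [← h]
    · have hA1 := fs_A_lb atanh hatanh t ⟨ht0, ht1⟩
      rw [fs_g_ne atanh ghat hghat β (ne_of_gt h)]
      have hkey : atanh t/(2*t) - 1/2 = (atanh t - t)/(2*t) := by field_simp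
      have hlb : t^2/6 ≤ (atanh t - t)/(2*t) := by
        rw [le_div_iff₀ (by linarith : (0:ℝ) < 2*t)]
        have hr : t^2/6*(2*t) = t^3/3 := by ring
        linarith
      have hub : 2*β*t^2 ≤ t^2/6 := by nlinarith [sq_nonneg t]
      linarith
  intro t ht
  rcases le_or_gt 0 t with h|h
  · exact key t h ht.2
  · have h2 := key (-t) (by linarith) (by linarith [ht.1])
    rwa [fs_g_even atanh hatanh ghat hghat β t] at h2

include hq

private lemma fs_c_main (hβ : 1/12 < β) :
    ∃ sp ∈ Set.Ioo (0:ℝ) 1, q sp = β ∧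
      (∀ t ∈ Set.Ioo (-1:ℝ) 1, ghat β sp ≤ ghat β t) ∧
      (∀ t ∈ Set.Ioo (-1:ℝ) 1,
        (∀ t' ∈ Set.Ioo (-1:ℝ) 1, ghat β t ≤ ghat β t') → t = sp ∨ t = -sp) := by
  have hβ0 : (0:ℝ) < β := by linarith
  obtain ⟨a, ha, hqa⟩ : ∃ a ∈ Set.Ioo (0:ℝ) 1, q a < β := by
    have h1 := fs_q_tendsto0 atanh hatanh q hq
    have hev : ∀ᶠ s in nhdsWithin 0 (Set.Ioi 0), q s < β := h1.eventually_lt_const hβ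
    have hmem : Set.Ioo (0:ℝ) 1 ∈ nhdsWithin (0:ℝ) (Set.Ioi 0) :=
      Ioo_mem_nhdsGT_of_mem ⟨le_refl 0, zero_lt_one⟩
    rcases (hev.and (eventually_of_mem hmem (fun x hx => hx))).exists with ⟨x, h1', h2'⟩
    exact ⟨x, h2', h1'⟩
  obtain ⟨b, hb, hab, hqb⟩ : ∃ b, b ∈ Set.Ioo (0:ℝ) 1 ∧ a < b ∧ β < q b := by
    have h2 := fs_q_tendsto1 atanh hatanh q hq
    have hev : ∀ᶠ s in nhdsWithin 1 (Set.Iio 1), β < q s := h2.eventually_gt_atTop β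
    have hmem : Set.Ioo a 1 ∈ nhdsWithin (1:ℝ) (Set.Iio 1) :=
      Ioo_mem_nhdsLT_of_mem ⟨ha.2, le_refl 1⟩
    rcases (hev.and (eventually_of_mem hmem (fun x hx => hx))).exists with ⟨x, h1', h2'⟩
    exact ⟨x, ⟨lt_trans ha.1 h2'.1, h2'.2⟩, h2'.1, h1'⟩
  have hcont : ContinuousOn q (Set.Icc a b) := by
    intro x hx
    have hx' : x ∈ Set.Ioo (0:ℝ) 1 := ⟨lt_of_lt_of_le ha.1 hx.1, lt_of_le_of_lt hx.2 hb.2⟩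
    exact (fs_hasDerivAt_q atanh hatanh q hq hx').continuousAt.continuousWithinAt
  obtain ⟨sp, hspab, hqsp⟩ : ∃ sp ∈ Set.Ioo a b, q sp = β := by
    have hIVT := intermediate_value_Ioo (le_of_lt hab) hcont
    obtain ⟨sp, h1, h2⟩ := hIVT ⟨hqa, hqb⟩
    exact ⟨sp, h1, h2⟩
  have hsp' : sp ∈ Set.Ioo (0:ℝ) 1 := ⟨lt_trans ha.1 hspab.1, lt_trans hspab.2 hb.2⟩
  have hmono := fs_q_mono atanh hatanh q hq
  have hanti : StrictAntiOn (ghat β) (Set.Icc 0 sp) := by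
    apply strictAntiOn_of_deriv_neg (convex_Icc 0 sp)
    · intro y hy
      rcases eq_or_lt_of_le hy.1 with h|h
      · rw [← h]
        exact (fs_g_deriv0 atanh hatanh q hq ghat hghat β hβ0).continuousAt.continuousWithinAt
      · exact (fs_g_hasDeriv_ne atanh hatanh q hq ghat hghat β (by linarith)
          (by linarith [hy.2, hsp'.2]) (ne_of_gt h)).continuousAt.continuousWithinAt
    · intro y hy
      rw [interior_Icc] at hy
      have hy' : y ∈ Set.Ioo (0:ℝ) 1 := ⟨hy.1, lt_trans hy.2 hsp'.2⟩
      rw [(fs_g_hasDeriv_ne atanh hatanh q hq ghat hghat β (by linarith [hy'.1]) hy'.2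
        (ne_of_gt hy.1)).deriv]
      have hqlt : q y < β := by rw [← hqsp]; exact hmono hy' hsp' hy.2
      nlinarith [hy.1]
  have hmonog : StrictMonoOn (ghat β) (Set.Ico sp 1) := by
    apply strictMonoOn_of_deriv_pos (convex_Ico sp 1)
    · intro y hy
      have hy0 : 0 < y := lt_of_lt_of_le hsp'.1 hy.1
      exact (fs_g_hasDeriv_ne atanh hatanh q hq ghat hghat β (by linarith) hy.2
        (ne_of_gt hy0)).continuousAt.continuousWithinAt
    · intro y hy
      rw [interior_Ico] at hy
      have hy' : y ∈ Set.Ioo (0:ℝ) 1 := ⟨lt_trans hsp'.1 hy.1, hy.2⟩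
      rw [(fs_g_hasDeriv_ne atanh hatanh q hq ghat hghat β (by linarith [hy'.1]) hy'.2
        (ne_of_gt hy'.1)).deriv]
      have hqgt : β < q y := by rw [← hqsp]; exact hmono hsp' hy' hy.1
      nlinarith [hy'.1]
  have hmin0 : ∀ t, 0 ≤ t → t < 1 → ghat β sp ≤ ghat β t := by
    intro t ht0 ht1
    rcases le_or_gt t sp with h|h
    · exact hanti.antitoneOn ⟨ht0, h⟩ ⟨le_of_lt hsp'.1, le_refl sp⟩ h
    · exact hmonog.monotoneOn ⟨le_refl sp, hsp'.2⟩ ⟨le_of_lt h, ht1⟩ (le_of_lt h)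
  have heq_abs : ∀ t : ℝ, ghat β t = ghat β |t| := by
    intro t
    rcases le_or_gt 0 t with h|h
    · rw [abs_of_nonneg h]
    · rw [abs_of_neg h]
      exact (fs_g_even atanh hatanh ghat hghat β t).symm
  have hminall : ∀ t ∈ Set.Ioo (-1:ℝ) 1, ghat β sp ≤ ghat β t := by
    intro t ht
    rw [heq_abs t]
    exact hmin0 |t| (abs_nonneg t) (abs_lt.2 ⟨ht.1, ht.2⟩)
  refine ⟨sp, hsp', hqsp, hminall, ?_⟩
  intro t ht htmin
  have h1 : ghat β t ≤ ghat β sp := htmin sp ⟨by linarith [hsp'.1], hsp'.2⟩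
  have h2 : ghat β sp ≤ ghat β t := hminall t ht
  have heqv : ghat β |t| = ghat β sp := by rw [← heq_abs t]; linarith
  have habs : |t| = sp := by
    by_contra hne
    rcases lt_or_gt_of_ne hne with h|h
    · have := hanti ⟨abs_nonneg t, le_of_lt h⟩ ⟨le_of_lt hsp'.1, le_refl sp⟩ h
      linarith
    · have habs1 : |t| < 1 := abs_lt.2 ⟨ht.1, ht.2⟩
      have := hmonog ⟨le_refl sp, hsp'.2⟩ ⟨le_of_lt h, habs1⟩ h
      linarith
  rcases (abs_eq (le_of_lt hsp'.1)).1 habs with h|h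
  · exact Or.inl h
  · exact Or.inr h

end glemmas2

/-- Lemma on the auxiliary functions `q` and `ĝ_β` of the four-spin model:
(a) `q(s) = 1/(8s²(1−s²)) − atanh(s)/(8s³)` is strictly increasing on `(0,1)` with
limits `1/12` at `0⁺` and `+∞` at `1⁻`; (b) for `β ≤ 1/12`, `0` is the unique critical
point of `ĝ_β` and its global minimizer; (c) for `β > 1/12`, `ĝ_β` has a local maximum
at `0` and exactly two global minimizers `±s₊` with `q(s₊) = β`.
Here `atanh t = log((1+t)/(1−t))/2` and `ĝ_β(t) = atanh(t)/(2t) − 2βt²`, `ĝ_β(0) = 1/2`. -/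
theorem four_spin_auxiliary_functions
    (atanh : ℝ → ℝ) (hatanh : ∀ t, atanh t = Real.log ((1 + t) / (1 - t)) / 2)
    (q : ℝ → ℝ)
    (hq : ∀ s, q s = 1 / (8 * s ^ 2 * (1 - s ^ 2)) - atanh s / (8 * s ^ 3))
    (ghat : ℝ → ℝ → ℝ)
    (hghat : ∀ β t, ghat β t =
      if t = 0 then 1 / 2 else atanh t / (2 * t) - 2 * β * t ^ 2) :
    (StrictMonoOn q (Set.Ioo 0 1) ∧
      Tendsto q (nhdsWithin 0 (Set.Ioi 0)) (nhds (1 / 12)) ∧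
      Tendsto q (nhdsWithin 1 (Set.Iio 1)) atTop) ∧
    (∀ β : ℝ, 0 < β → β ≤ 1 / 12 →
      deriv (ghat β) 0 = 0 ∧
      (∀ t ∈ Set.Ioo (-1 : ℝ) 1, deriv (ghat β) t = 0 → t = 0) ∧
      (∀ t ∈ Set.Ioo (-1 : ℝ) 1, ghat β 0 ≤ ghat β t)) ∧
    (∀ β : ℝ, 1 / 12 < β →
      IsLocalMax (ghat β) 0 ∧
      ∃ sp ∈ Set.Ioo (0 : ℝ) 1, q sp = β ∧
        (∀ t ∈ Set.Ioo (-1 : ℝ) 1, ghat β sp ≤ ghat β t) ∧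
        (∀ t ∈ Set.Ioo (-1 : ℝ) 1,
          (∀ t' ∈ Set.Ioo (-1 : ℝ) 1, ghat β t ≤ ghat β t') → t = sp ∨ t = -sp)) := by
  refine ⟨⟨fs_q_mono atanh hatanh q hq, fs_q_tendsto0 atanh hatanh q hq,
    fs_q_tendsto1 atanh hatanh q hq⟩, ?_, ?_⟩
  · intro β hβ0 hβ
    refine ⟨(fs_g_deriv0 atanh hatanh q hq ghat hghat β hβ0).deriv, ?_, ?_⟩
    · intro t ht hderiv
      by_contra htne
      have hd := (fs_g_hasDeriv_ne atanh hatanh q hq ghat hghat β ht.1 ht.2 htne).deriv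
      rw [hd] at hderiv
      have hqt : 1/12 < q t := by
        rcases lt_or_gt_of_ne htne with h|h
        · have he := fs_q_even atanh hatanh q hq (-t)
          rw [neg_neg] at he
          rw [he]
          exact fs_q_gt atanh hatanh q hq (-t) ⟨neg_pos.2 h, by linarith [ht.1]⟩
        · exact fs_q_gt atanh hatanh q hq t ⟨h, ht.2⟩
      have h4 : 4*t ≠ 0 := by simpa using htne
      have h5 : q t - β ≠ 0 := ne_of_gt (by linarith)
      exact (mul_ne_zero h4 h5) hderiv
    · intro t ht
      rw [fs_g_zero atanh ghat hghat β]
      exact fs_g_min_b atanh hatanh ghat hghat β hβ0 hβ t ht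
  · intro β hβ
    exact ⟨fs_g_localmax atanh hatanh q hq ghat hghat β hβ,
      fs_c_main atanh hatanh q hq ghat hghat β hβ⟩
end

section
/- For β > 0 define g_β(t) = −E(t)/t² − β t² and ĝ_β(t) = atanh(t)/(2t) − 2β t² for t ∈ [−1,1]∖{0}, where E(t) = −((1+t)/2) log(1+t) − ((1−t)/2) log(1−t), and set g(β) = inf_{t∈[−1,1]∖{0}} g_β(t) and ĝ(β) = inf_{t∈[−1,1]∖{0}} ĝ_β(t). Then both g and ĝ are non-increasing functions of β on (0,∞); g(β) = ĝ(β) = 1/2 for all β ≤ 1/12; and ĝ(β) ≤ g(β) for all β > 0. -/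
noncomputable def Afun (t : ℝ) : ℝ := (Real.log (1+t) - Real.log (1-t))/2
noncomputable def Efun (t : ℝ) : ℝ :=
  -((1 + t) / 2) * Real.log (1 + t) - ((1 - t) / 2) * Real.log (1 - t)

lemma Afun_neg (t : ℝ) : Afun (-t) = -Afun t := by
  simp only [Afun]; ring

lemma Efun_neg (t : ℝ) : Efun (-t) = Efun t := by
  simp only [Efun]; ring

lemma hA_deriv {t : ℝ} (h1 : -1 < t) (h2 : t < 1) : HasDerivAt Afun (1/(1-t^2)) t := by
  have hp : (0:ℝ) < 1 + t := by linarith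
  have hm : (0:ℝ) < 1 - t := by linarith
  have d1 : HasDerivAt (fun x : ℝ => Real.log (1+x)) (1/(1+t)) t := by
    have h := (HasDerivAt.const_add 1 (hasDerivAt_id t)).log hp.ne'
    simpa using h
  have d2 : HasDerivAt (fun x : ℝ => Real.log (1-x)) (-(1/(1-t))) t := by
    have h := ((hasDerivAt_id t).const_sub 1).log hm.ne'
    simpa [neg_div] using h
  have := (d1.sub d2).div_const 2
  have hs : (1:ℝ) - t^2 ≠ 0 := by nlinarith
  refine this.congr_deriv ?_
  field_simp [hs, hp.ne', hm.ne']
  ring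

lemma hE_deriv {t : ℝ} (h1 : -1 < t) (h2 : t < 1) :
    HasDerivAt (fun x => -Efun x) (Afun t) t := by
  have hp : (0:ℝ) < 1 + t := by linarith
  have hm : (0:ℝ) < 1 - t := by linarith
  have d1 : HasDerivAt (fun x : ℝ => Real.log (1+x)) (1/(1+t)) t := by
    simpa using (HasDerivAt.const_add 1 (hasDerivAt_id t)).log hp.ne'
  have d2 : HasDerivAt (fun x : ℝ => Real.log (1-x)) (-(1/(1-t))) t := by
    simpa [neg_div] using ((hasDerivAt_id t).const_sub 1).log hm.ne'
  have m1 : HasDerivAt (fun x : ℝ => ((1+x)/2) * Real.log (1+x))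
      ((1/2) * Real.log (1+t) + ((1+t)/2) * (1/(1+t))) t := by
    exact (((HasDerivAt.const_add 1 (hasDerivAt_id t)).div_const 2)).mul d1
  have m2 : HasDerivAt (fun x : ℝ => ((1-x)/2) * Real.log (1-x))
      ((-1/2) * Real.log (1-t) + ((1-t)/2) * (-(1/(1-t)))) t := by
    have : HasDerivAt (fun x : ℝ => (1-x)/2) (-1/2) t := by
      simpa [neg_div] using ((hasDerivAt_id t).const_sub 1).div_const 2
    exact this.mul d2
  have hsum := m1.add m2
  have heq : (fun x => -Efun x) = fun x : ℝ =>
      ((1+x)/2) * Real.log (1+x) + ((1-x)/2) * Real.log (1-x) := by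
    funext x; simp only [Efun]; ring
  rw [heq]
  refine hsum.congr_deriv ?_
  rw [Afun]
  field_simp
  ring

lemma mono_aux {f f' : ℝ → ℝ} {s : Set ℝ} (hconv : Convex ℝ s)
    (hcont : ContinuousOn f s) (hd : ∀ x ∈ interior s, HasDerivAt f (f' x) x)
    (h0 : ∀ x ∈ interior s, 0 ≤ f' x) : MonotoneOn f s :=
  monotoneOn_of_deriv_nonneg hconv hcont
    (fun x hx => (hd x hx).differentiableAt.differentiableWithinAt)
    (fun x hx => (hd x hx).deriv ▸ h0 x hx)

lemma hE_cont : Continuous Efun := by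
  have h : Efun = fun t => -(1/2) * ((1+t) * Real.log (1+t))
      - (1/2) * ((1-t) * Real.log (1-t)) := by
    funext t; simp only [Efun]; ring
  rw [h]
  have c1 : Continuous fun t : ℝ => (1+t) * Real.log (1+t) :=
    Real.continuous_mul_log.comp (by continuity)
  have c2 : Continuous fun t : ℝ => (1-t) * Real.log (1-t) :=
    Real.continuous_mul_log.comp (by continuity)
  exact (continuous_const.mul c1).sub (continuous_const.mul c2)

-- L1 : atanh t ≥ t + t^3/3 on [0,1)
lemma L1 {t : ℝ} (h0 : 0 ≤ t) (h1 : t < 1) : t + t^3/3 ≤ Afun t := by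
  have key : MonotoneOn (fun x => Afun x - (x + x^3/3)) (Set.Ico (0:ℝ) 1) := by
    apply mono_aux (f' := fun x => 1/(1-x^2) - (1 + x^2)) (convex_Ico 0 1)
    · intro x hx
      have hx1 : -1 < x := by cases hx; linarith
      have hx2 : x < 1 := hx.2
      exact ((hA_deriv hx1 hx2).continuousAt.sub (by fun_prop)).continuousWithinAt
    · intro x hx
      rw [interior_Ico] at hx
      have d := (hA_deriv (by linarith [hx.1] : -1 < x) hx.2).sub
        ((hasDerivAt_id x).add (((hasDerivAt_pow 3 x)).div_const 3))
      refine d.congr_deriv ?_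
      push_cast
      ring
    · intro x hx
      rw [interior_Ico] at hx
      have hs : (0:ℝ) < 1 - x^2 := by nlinarith [hx.1, hx.2]
      have : 1/(1-x^2) - (1+x^2) = x^4 / (1-x^2) := by field_simp; ring
      rw [this]
      positivity
  have := key (Set.mem_Ico.2 ⟨le_refl 0, by norm_num⟩) (Set.mem_Ico.2 ⟨h0, h1⟩) h0
  simp only [Afun] at this ⊢
  simp at this
  linarith [this]

-- L2 : atanh t ≤ t + 4 t^3 on [0,1/2]
lemma L2 {t : ℝ} (h0 : 0 ≤ t) (h1 : t ≤ 1/2) : Afun t ≤ t + 4*t^3 := by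
  have key : MonotoneOn (fun x => (x + 4*x^3) - Afun x) (Set.Icc (0:ℝ) (1/2)) := by
    apply mono_aux (f' := fun x => (1 + 12*x^2) - 1/(1-x^2)) (convex_Icc 0 (1/2))
    · intro x hx
      have hx1 : -1 < x := by cases hx; linarith
      have hx2 : x < 1 := by cases hx; linarith
      exact ((continuousAt_id.add (by fun_prop)).sub
        (hA_deriv hx1 hx2).continuousAt).continuousWithinAt
    · intro x hx
      rw [interior_Icc] at hx
      have d := (((hasDerivAt_id x).add (((hasDerivAt_pow 3 x)).const_mul 4)).sub
        (hA_deriv (by linarith [hx.1]) (by linarith [hx.2])))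
      refine d.congr_deriv ?_
      push_cast
      ring
    · intro x hx
      rw [interior_Icc] at hx
      have hs : (0:ℝ) < 1 - x^2 := by nlinarith [hx.1, hx.2]
      have : (1 + 12*x^2) - 1/(1-x^2) = x^2*(11 - 12*x^2) / (1-x^2) := by
        field_simp; ring
      rw [this]
      have : (0:ℝ) ≤ 11 - 12*x^2 := by nlinarith [hx.1, hx.2]
      positivity
  have := key (Set.mem_Icc.2 ⟨le_refl 0, by norm_num⟩) (Set.mem_Icc.2 ⟨h0, h1⟩) h0
  simp only [Afun] at this ⊢
  simp at this
  linarith [this]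

-- L3 : -E t ≥ t^2/2 + t^4/12 on [0,1]
lemma L3 {t : ℝ} (h0 : 0 ≤ t) (h1 : t ≤ 1) : t^2/2 + t^4/12 ≤ -Efun t := by
  have key : MonotoneOn (fun x => -Efun x - (x^2/2 + x^4/12)) (Set.Icc (0:ℝ) 1) := by
    apply mono_aux (f' := fun x => Afun x - (x + x^3/3)) (convex_Icc 0 1)
    · exact (hE_cont.neg.sub (by fun_prop)).continuousOn
    · intro x hx
      rw [interior_Icc] at hx
      have d := (hE_deriv (by linarith [hx.1]) hx.2).sub
        (((hasDerivAt_pow 2 x).div_const 2).add ((hasDerivAt_pow 4 x).div_const 12))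
      refine d.congr_deriv ?_
      push_cast
      ring
    · intro x hx
      rw [interior_Icc] at hx
      have := L1 hx.1.le hx.2
      simpa using this
  have := key (Set.mem_Icc.2 ⟨le_refl 0, by norm_num⟩) (Set.mem_Icc.2 ⟨h0, h1⟩) h0
  simp only [Efun] at this ⊢
  simp at this
  linarith [this]

-- L4 : -E t ≤ t^2/2 + t^4 on [0,1/2]
lemma L4 {t : ℝ} (h0 : 0 ≤ t) (h1 : t ≤ 1/2) : -Efun t ≤ t^2/2 + t^4 := by
  have key : MonotoneOn (fun x => (x^2/2 + x^4) + Efun x) (Set.Icc (0:ℝ) (1/2)) := by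
    apply mono_aux (f' := fun x => (x + 4*x^3) - Afun x) (convex_Icc 0 (1/2))
    · exact ((continuousOn_id.pow 2).div_const 2 |>.add (continuousOn_id.pow 4)).add
        hE_cont.continuousOn
    · intro x hx
      rw [interior_Icc] at hx
      have d := (((hasDerivAt_pow 2 x).div_const 2).add (hasDerivAt_pow 4 x)).sub
        (hE_deriv (by linarith [hx.1]) (by linarith [hx.2]))
      have heq : (fun x => x^2/2 + x^4 + Efun x)
          = fun x : ℝ => (x^2/2 + x^4) - (-Efun x) := by funext y; ring
      rw [heq]
      refine d.congr_deriv ?_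
      push_cast
      ring
    · intro x hx
      rw [interior_Icc] at hx
      have := L2 hx.1.le hx.2.le
      simpa using this
  have := key (Set.mem_Icc.2 ⟨le_refl 0, by norm_num⟩) (Set.mem_Icc.2 ⟨h0, h1⟩) h0
  simp only [Efun] at this ⊢
  simp at this
  linarith [this]

lemma sqrt2_sq : Real.sqrt 2 ^ 2 = 2 := Real.sq_sqrt (by norm_num)
lemma sqrt2_pos : (0:ℝ) < Real.sqrt 2 := Real.sqrt_pos.2 (by norm_num)
lemma one_lt_sqrt2 : (1:ℝ) < Real.sqrt 2 := by
  nlinarith [sqrt2_sq, sqrt2_pos]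

-- derivative of x ↦ Afun (x/√2), valid for |x| < √2
lemma hA2_deriv {x : ℝ} (h1 : -1 < x/Real.sqrt 2) (h2 : x/Real.sqrt 2 < 1) :
    HasDerivAt (fun y => Afun (y/Real.sqrt 2))
      (1/(1-(x/Real.sqrt 2)^2) * (1/Real.sqrt 2)) x := by
  have hinner : HasDerivAt (fun y : ℝ => y/Real.sqrt 2) (1/Real.sqrt 2) x := by
    simpa using (hasDerivAt_id x).div_const (Real.sqrt 2)
  exact (hA_deriv h1 h2).comp x hinner

lemma x_div_sqrt2_mem {x : ℝ} (h0 : -1 ≤ x) (h1 : x ≤ 1) :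
    -1 < x/Real.sqrt 2 ∧ x/Real.sqrt 2 < 1 := by
  have hs := sqrt2_pos
  have ho := one_lt_sqrt2
  constructor
  · rw [lt_div_iff₀ hs]
    nlinarith
  · rw [div_lt_one hs]
    linarith

-- LH : Afun(t/√2)/√2 + t/(2-t²) ≤ Afun t on [0,1)
lemma LH {t : ℝ} (h0 : 0 ≤ t) (h1 : t < 1) :
    Afun (t/Real.sqrt 2)/Real.sqrt 2 + t/(2-t^2) ≤ Afun t := by
  have key : MonotoneOn
      (fun x => Afun x - (Afun (x/Real.sqrt 2)/Real.sqrt 2 + x/(2-x^2)))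
      (Set.Ico (0:ℝ) 1) := by
    apply mono_aux (f' := fun x => 1/(1-x^2) - 1/(2-x^2) - (2+x^2)/(2-x^2)^2)
      (convex_Ico 0 1)
    · intro x hx
      have hx1 : -1 < x := by cases hx; linarith
      have hx2 : x < 1 := hx.2
      obtain ⟨hm1, hm2⟩ := x_div_sqrt2_mem (by linarith) hx2.le
      have hd2 : (2:ℝ) - x^2 ≠ 0 := by nlinarith
      exact ((hA_deriv hx1 hx2).continuousAt.sub
        (((hA2_deriv hm1 hm2).continuousAt.div_const _).add
          (continuousAt_id.div (by fun_prop) hd2))).continuousWithinAt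
    · intro x hx
      rw [interior_Ico] at hx
      have hx1 : -1 < x := by linarith [hx.1]
      have hx2 : x < 1 := hx.2
      obtain ⟨hm1, hm2⟩ := x_div_sqrt2_mem (by linarith) hx2.le
      have hd2 : (2:ℝ) - x^2 ≠ 0 := by nlinarith
      have ddiv : HasDerivAt (fun y : ℝ => y/(2-y^2))
          ((1*(2-x^2) - x*(-(2*x)))/(2-x^2)^2) x := by
        have dden : HasDerivAt (fun y : ℝ => 2 - y^2) (-(2*x)) x := by
          simpa using (hasDerivAt_pow 2 x).const_sub 2
        exact (hasDerivAt_id x).div dden hd2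
      have d := (hA_deriv hx1 hx2).sub
        ((((hA2_deriv hm1 hm2).div_const (Real.sqrt 2))).add ddiv)
      have hss : Real.sqrt 2 * Real.sqrt 2 = 2 := Real.mul_self_sqrt (by norm_num)
      have h2x : (0:ℝ) < 2 - x^2 := by nlinarith
      have h1xh : ((1:ℝ) - x^2/2) ≠ 0 := by nlinarith
      have e1 : 1/(1-(x/Real.sqrt 2)^2) * (1/Real.sqrt 2) / Real.sqrt 2 = 1/(2-x^2) := by
        rw [div_pow, sqrt2_sq, mul_div_assoc, div_div, hss]
        field_simp
      refine d.congr_deriv ?_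
      rw [e1]
      ring
    · intro x hx
      rw [interior_Ico] at hx
      have h1x : (0:ℝ) < 1 - x^2 := by nlinarith [hx.1, hx.2]
      have h2x : (0:ℝ) < 2 - x^2 := by nlinarith [hx.2]
      have : 1/(1-x^2) - 1/(2-x^2) - (2+x^2)/(2-x^2)^2
          = x^4 / ((1-x^2)*(2-x^2)^2) := by
        field_simp
        ring
      rw [this]
      positivity
  have hA0 : Afun 0 = 0 := by simp [Afun]
  have h2 := key (Set.mem_Ico.2 ⟨le_refl 0, by norm_num⟩) (Set.mem_Ico.2 ⟨h0, h1⟩) h0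
  norm_num [hA0] at h2
  linarith

-- L5 : t * Afun (t/√2) ≤ √2 * (-Efun t) on [0,1]
lemma L5 {t : ℝ} (h0 : 0 ≤ t) (h1 : t ≤ 1) :
    t * Afun (t/Real.sqrt 2) ≤ Real.sqrt 2 * (-Efun t) := by
  have key : MonotoneOn
      (fun x => Real.sqrt 2 * (-Efun x) - x * Afun (x/Real.sqrt 2))
      (Set.Icc (0:ℝ) 1) := by
    apply mono_aux (f' := fun x => Real.sqrt 2 * Afun x
      - (Afun (x/Real.sqrt 2) + x * (1/(1-(x/Real.sqrt 2)^2) * (1/Real.sqrt 2))))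
      (convex_Icc 0 1)
    · intro x hx
      obtain ⟨hm1, hm2⟩ := x_div_sqrt2_mem (by cases hx; linarith) hx.2
      exact ((continuous_const.mul hE_cont.neg).continuousAt.sub
        (continuousAt_id.mul (hA2_deriv hm1 hm2).continuousAt)).continuousWithinAt
    · intro x hx
      rw [interior_Icc] at hx
      obtain ⟨hm1, hm2⟩ := x_div_sqrt2_mem (by linarith [hx.1]) hx.2.le
      have d := ((hE_deriv (by linarith [hx.1]) hx.2).const_mul (Real.sqrt 2)).sub
        ((hasDerivAt_id x).mul (hA2_deriv hm1 hm2))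
      refine d.congr_deriv ?_
      simp only [id_eq]
      ring
    · intro x hx
      rw [interior_Icc] at hx
      have hss : Real.sqrt 2 * Real.sqrt 2 = 2 := Real.mul_self_sqrt (by norm_num)
      have h2x : (0:ℝ) < 2 - x^2 := by nlinarith [hx.1, hx.2]
      have h1xp : (0:ℝ) < 1 - x^2/2 := by nlinarith
      have e1 : 1/(1-(x/Real.sqrt 2)^2) * (1/Real.sqrt 2) = Real.sqrt 2/(2-x^2) := by
        rw [div_pow, sqrt2_sq, div_mul_div_comm, one_mul]
        rw [div_eq_div_iff (mul_pos h1xp sqrt2_pos).ne' h2x.ne']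
        linear_combination (-(1 - x^2/2)) * hss
      rw [e1]
      have hH := LH hx.1.le hx.2
      have : Real.sqrt 2 * Afun x - (Afun (x/Real.sqrt 2) + x * (Real.sqrt 2/(2-x^2)))
          = Real.sqrt 2 * (Afun x - (Afun (x/Real.sqrt 2)/Real.sqrt 2 + x/(2-x^2))) := by
        field_simp
      rw [this]
      have := sqrt2_pos
      nlinarith [hH]
  have hE0 : Efun 0 = 0 := by simp [Efun]
  have hA0 : Afun 0 = 0 := by simp [Afun]
  have h2 := key (Set.mem_Icc.2 ⟨le_refl 0, by norm_num⟩) (Set.mem_Icc.2 ⟨h0, h1⟩) h0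
  norm_num [hE0, hA0] at h2
  linarith

/-- Properties of `g(β) = inf_{t∈[−1,1]∖{0}} (−E(t)/t² − βt²)` and
`ĝ(β) = inf_{t∈(−1,1)∖{0}} (atanh(t)/(2t) − 2βt²)`: both are non-increasing in `β` on
`(0,∞)`, `g(β) = ĝ(β) = 1/2` for `β ≤ 1/12`, and `ĝ(β) ≤ g(β)` for all `β > 0`.
(The infimum defining `ĝ` is taken over the open interval, where `atanh` is finite;
at `t = ±1` one has `ĝ_β(t) = +∞`, so this does not change the infimum.) -/
theorem four_spin_g_ghat_properties
    (E : ℝ → ℝ)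
    (hE : ∀ t, E t = -((1 + t) / 2) * Real.log (1 + t) -
      ((1 - t) / 2) * Real.log (1 - t))
    (atanh : ℝ → ℝ) (hatanh : ∀ t, atanh t = Real.log ((1 + t) / (1 - t)) / 2)
    (g gh : ℝ → ℝ)
    (hg : ∀ β, g β = sInf ((fun t => -E t / t ^ 2 - β * t ^ 2) ''
      (Set.Icc (-1 : ℝ) 1 \ {0})))
    (hgh : ∀ β, gh β = sInf ((fun t => atanh t / (2 * t) - 2 * β * t ^ 2) ''
      (Set.Ioo (-1 : ℝ) 1 \ {0}))) :
    AntitoneOn g (Set.Ioi 0) ∧ AntitoneOn gh (Set.Ioi 0) ∧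
    (∀ β : ℝ, 0 < β → β ≤ 1 / 12 → g β = 1 / 2 ∧ gh β = 1 / 2) ∧
    (∀ β : ℝ, 0 < β → gh β ≤ g β) := by
  have hEE : ∀ t, E t = Efun t := hE
  have hAA : ∀ t : ℝ, -1 < t → t < 1 → atanh t = Afun t := by
    intro t h1 h2
    rw [hatanh t, Afun, Real.log_div (by linarith) (by linarith)]
  -- nonemptiness of domains/images
  have hDg : (1:ℝ) ∈ Set.Icc (-1:ℝ) 1 \ {0} := by
    refine ⟨⟨by norm_num, le_refl 1⟩, by norm_num⟩
  have hDh : (1/2:ℝ) ∈ Set.Ioo (-1:ℝ) 1 \ {0} := by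
    refine ⟨⟨by norm_num, by norm_num⟩, by norm_num⟩
  have hSgne : ∀ β : ℝ, ((fun t => -E t / t ^ 2 - β * t ^ 2) ''
      (Set.Icc (-1 : ℝ) 1 \ {0})).Nonempty :=
    fun β => ⟨_, Set.mem_image_of_mem _ hDg⟩
  have hShne : ∀ β : ℝ, ((fun t => atanh t / (2 * t) - 2 * β * t ^ 2) ''
      (Set.Ioo (-1 : ℝ) 1 \ {0})).Nonempty :=
    fun β => ⟨_, Set.mem_image_of_mem _ hDh⟩
  -- lower bound for g-values
  have hgval : ∀ β : ℝ, ∀ t ∈ Set.Icc (-1:ℝ) 1 \ {0},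
      1/2 + t^2/12 - β * t^2 ≤ -E t / t^2 - β * t^2 := by
    rintro β t ⟨⟨hta, htb⟩, ht0⟩
    have ht0' : t ≠ 0 := by simpa using ht0
    have htsq : (0:ℝ) < t^2 := by positivity
    have hEt : Efun t = Efun |t| := by
      rcases abs_cases t with ⟨h, _⟩ | ⟨h, _⟩
      · rw [h]
      · rw [h, Efun_neg]
    have h3 := L3 (abs_nonneg t) (abs_le.2 ⟨hta, htb⟩)
    have h4 : |t|^4 = t^4 := by
      rw [← abs_pow]; exact abs_of_nonneg (by positivity)
    rw [sq_abs, h4, ← hEt] at h3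
    have : 1/2 + t^2/12 ≤ -E t / t^2 := by
      rw [hEE, le_div_iff₀ htsq]
      nlinarith
    linarith
  have hSgbdd : ∀ β : ℝ, 0 ≤ β → BddBelow ((fun t => -E t / t ^ 2 - β * t ^ 2) ''
      (Set.Icc (-1 : ℝ) 1 \ {0})) := by
    intro β hβ
    refine ⟨1/2 - β, ?_⟩
    rintro y ⟨t, ht, rfl⟩
    have h := hgval β t ht
    obtain ⟨⟨hta, htb⟩, _⟩ := ht
    have h1 : t^2 ≤ 1 := by nlinarith
    have h2 : 0 ≤ t^2 := sq_nonneg t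
    nlinarith
  -- lower bound for gh-values
  have hghval : ∀ β : ℝ, ∀ t ∈ Set.Ioo (-1:ℝ) 1 \ {0},
      1/2 + t^2/6 - 2*β * t^2 ≤ atanh t / (2*t) - 2*β * t^2 := by
    rintro β t ⟨⟨hta, htb⟩, ht0⟩
    have ht0' : t ≠ 0 := by simpa using ht0
    have htsq : (0:ℝ) < t^2 := by positivity
    have habs : atanh t / (2*t) = Afun |t| / (2*|t|) := by
      rcases abs_cases t with ⟨h, _⟩ | ⟨h, _⟩
      · rw [h, hAA t hta htb]
      · rw [h, hAA t hta htb]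
        rw [show Afun (-t) = -Afun t from Afun_neg t]
        field_simp
    have hu0 : 0 < |t| := abs_pos.2 ht0'
    have hu1 : |t| < 1 := abs_lt.2 ⟨hta, htb⟩
    have h1 := L1 hu0.le hu1
    have : 1/2 + t^2/6 ≤ atanh t / (2*t) := by
      rw [habs, le_div_iff₀ (by positivity)]
      have hcube : |t|^3 = t^2 * |t| := by
        rw [pow_succ, sq_abs]
      nlinarith [hcube]
    linarith
  have hShbdd : ∀ β : ℝ, 0 ≤ β → BddBelow ((fun t => atanh t / (2 * t) - 2 * β * t ^ 2) ''
      (Set.Ioo (-1 : ℝ) 1 \ {0})) := by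
    intro β hβ
    refine ⟨1/2 - 2*β, ?_⟩
    rintro y ⟨t, ht, rfl⟩
    have h := hghval β t ht
    obtain ⟨⟨hta, htb⟩, _⟩ := ht
    have h1 : t^2 ≤ 1 := by nlinarith
    have h2 : 0 ≤ t^2 := sq_nonneg t
    nlinarith
  -- small-t upper bounds
  have hgsmall : ∀ β : ℝ, 0 ≤ β → ∀ t : ℝ, 0 < t → t ≤ 1/2 →
      -E t / t^2 - β * t^2 ≤ 1/2 + t^2 := by
    intro β hβ t ht0 ht1
    have htsq : (0:ℝ) < t^2 := by positivity
    have h4 := L4 ht0.le ht1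
    have : -E t / t^2 ≤ 1/2 + t^2 := by
      rw [hEE, div_le_iff₀ htsq]; nlinarith
    nlinarith [mul_nonneg hβ (sq_nonneg t)]
  have hhsmall : ∀ β : ℝ, 0 ≤ β → ∀ t : ℝ, 0 < t → t ≤ 1/2 →
      atanh t / (2*t) - 2*β * t^2 ≤ 1/2 + 2*t^2 := by
    intro β hβ t ht0 ht1
    have h2 := L2 ht0.le ht1
    have : atanh t / (2*t) ≤ 1/2 + 2*t^2 := by
      rw [hAA t (by linarith) (by linarith), div_le_iff₀ (by linarith)]
      nlinarith
    nlinarith [mul_nonneg hβ (sq_nonneg t)]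
  -- antitonicity
  have hganti : AntitoneOn g (Set.Ioi 0) := by
    intro a ha b hb hab
    rw [hg a, hg b]
    refine le_csInf (hSgne a) ?_
    rintro y ⟨t, ht, rfl⟩
    have step := csInf_le (hSgbdd b (le_of_lt hb)) (Set.mem_image_of_mem
      (fun t => -E t / t ^ 2 - b * t ^ 2) ht)
    have h2 : -E t/t^2 - b*t^2 ≤ -E t/t^2 - a*t^2 := by nlinarith [sq_nonneg t]
    simp only at step ⊢
    linarith
  have hhanti : AntitoneOn gh (Set.Ioi 0) := by
    intro a ha b hb hab
    rw [hgh a, hgh b]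
    refine le_csInf (hShne a) ?_
    rintro y ⟨t, ht, rfl⟩
    have step := csInf_le (hShbdd b (le_of_lt hb)) (Set.mem_image_of_mem
      (fun t => atanh t / (2 * t) - 2 * b * t ^ 2) ht)
    have h2 : atanh t/(2*t) - 2*b*t^2 ≤ atanh t/(2*t) - 2*a*t^2 := by
      nlinarith [sq_nonneg t]
    simp only at step ⊢
    linarith
  -- values at β ≤ 1/12
  have hgeq : ∀ β : ℝ, 0 < β → β ≤ 1/12 → g β = 1/2 := by
    intro β hβ hβ'
    rw [hg β]
    apply le_antisymm
    · apply le_of_forall_pos_le_add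
      intro ε hε
      set t : ℝ := min (1/2) (Real.sqrt ε) with htdef
      have ht0 : 0 < t := lt_min (by norm_num) (Real.sqrt_pos.2 hε)
      have ht1 : t ≤ 1/2 := min_le_left _ _
      have htmem : t ∈ Set.Icc (-1:ℝ) 1 \ {0} :=
        ⟨⟨by linarith, by linarith⟩, by simp [ht0.ne']⟩
      have hle := csInf_le (hSgbdd β hβ.le) (Set.mem_image_of_mem
        (fun t => -E t / t ^ 2 - β * t ^ 2) htmem)
      have hsmall := hgsmall β hβ.le t ht0 ht1
      have htsq : t^2 ≤ ε := by
        have h1 : t ≤ Real.sqrt ε := min_le_right _ _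
        nlinarith [Real.sq_sqrt hε.le, Real.sqrt_nonneg ε]
      linarith
    · refine le_csInf (hSgne β) ?_
      rintro y ⟨t, ht, rfl⟩
      have h := hgval β t ht
      have := sq_nonneg t
      simp only
      nlinarith
  have hheq : ∀ β : ℝ, 0 < β → β ≤ 1/12 → gh β = 1/2 := by
    intro β hβ hβ'
    rw [hgh β]
    apply le_antisymm
    · apply le_of_forall_pos_le_add
      intro ε hε
      have hε2 : (0:ℝ) < ε/2 := by linarith
      set t : ℝ := min (1/2) (Real.sqrt (ε/2)) with htdef
      have ht0 : 0 < t := lt_min (by norm_num) (Real.sqrt_pos.2 hε2)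
      have ht1 : t ≤ 1/2 := min_le_left _ _
      have htmem : t ∈ Set.Ioo (-1:ℝ) 1 \ {0} :=
        ⟨⟨by linarith, by linarith⟩, by simp [ht0.ne']⟩
      have hle := csInf_le (hShbdd β hβ.le) (Set.mem_image_of_mem
        (fun t => atanh t / (2 * t) - 2 * β * t ^ 2) htmem)
      have hsmall := hhsmall β hβ.le t ht0 ht1
      have htsq : t^2 ≤ ε/2 := by
        have h1 : t ≤ Real.sqrt (ε/2) := min_le_right _ _
        nlinarith [Real.sq_sqrt hε2.le, Real.sqrt_nonneg (ε/2)]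
      linarith
    · refine le_csInf (hShne β) ?_
      rintro y ⟨t, ht, rfl⟩
      have h := hghval β t ht
      have := sq_nonneg t
      simp only
      nlinarith
  -- gh ≤ g
  have hlege : ∀ β : ℝ, 0 < β → gh β ≤ g β := by
    intro β hβ
    rw [hg β, hgh β]
    refine le_csInf (hSgne β) ?_
    rintro y ⟨t, ht, rfl⟩
    obtain ⟨⟨hta, htb⟩, ht0⟩ := ht
    have ht0' : t ≠ 0 := by simpa using ht0
    have hu0 : 0 < |t| := abs_pos.2 ht0'
    have hu1 : |t| ≤ 1 := abs_le.2 ⟨hta, htb⟩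
    obtain ⟨hs1, hs2⟩ := x_div_sqrt2_mem (by linarith : (-1:ℝ) ≤ |t|) hu1
    have hs0 : 0 < |t|/Real.sqrt 2 := div_pos hu0 sqrt2_pos
    have hsmem : |t|/Real.sqrt 2 ∈ Set.Ioo (-1:ℝ) 1 \ {0} :=
      ⟨⟨hs1, hs2⟩, by simp [hs0.ne']⟩
    have step1 := csInf_le (hShbdd β hβ.le) (Set.mem_image_of_mem
      (fun t => atanh t / (2 * t) - 2 * β * t ^ 2) hsmem)
    simp only at step1 ⊢
    refine step1.trans ?_
    rw [hAA _ (by linarith) hs2, hEE]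
    have hEt : Efun t = Efun |t| := by
      rcases abs_cases t with ⟨h, _⟩ | ⟨h, _⟩
      · rw [h]
      · rw [h, Efun_neg]
    rw [hEt, ← sq_abs t]
    have hss : Real.sqrt 2 * Real.sqrt 2 = 2 := Real.mul_self_sqrt (by norm_num)
    have hsq : (|t|/Real.sqrt 2)^2 = |t|^2/2 := by rw [div_pow, sqrt2_sq]
    have h2s : 2*(|t|/Real.sqrt 2) = Real.sqrt 2 * |t| := by
      field_simp
      linear_combination (-1) * sqrt2_sq
    rw [hsq, h2s]
    have h5 := L5 hu0.le hu1
    have hdiv : Afun (|t|/Real.sqrt 2)/(Real.sqrt 2 * |t|) ≤ -Efun |t| / |t|^2 := by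
      rw [div_le_div_iff₀ (mul_pos sqrt2_pos hu0) (pow_pos hu0 2)]
      nlinarith [mul_le_mul_of_nonneg_left h5 hu0.le]
    nlinarith [hdiv]
  exact ⟨hganti, hhanti, fun β h1 h2 => ⟨hgeq β h1 h2, hheq β h1 h2⟩, hlege⟩
end

section
/- For β > 0 and h ∈ ℝ define F(t) = β t^4 + h t² + E(t) on [−1,1], where E(t) = −((1+t)/2) log(1+t) − ((1−t)/2) log(1−t), and let g(β) = inf_{t∈[−1,1]∖{0}} g_β(t) with g_β(t) = −E(t)/t² − β t². Then: (i) if h < g(β), then t = 0 is the unique maximizer of F on [−1,1]; (ii) if β > 1/12 and h > g(β), then t = 0 is not a maximizer of F on [−1,1]. -/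
/-- Lemma (iii) for the four-spin model: with `F(t) = βt⁴ + ht² + E(t)` and
`g(β) = inf_{t∈[−1,1]∖{0}} (−E(t)/t² − βt²)`:
(i) if `h < g(β)` then `0` is the unique maximizer of `F` on `[−1,1]`;
(ii) if `β > 1/12` and `h > g(β)` then `0` is not a maximizer of `F` on `[−1,1]`. -/
theorem four_spin_zero_maximizer_criterion (β h : ℝ) (hβ : 0 < β)
    (E : ℝ → ℝ)
    (hE : ∀ t, E t = -((1 + t) / 2) * Real.log (1 + t) -
      ((1 - t) / 2) * Real.log (1 - t))
    (F : ℝ → ℝ) (hF : ∀ t, F t = β * t ^ 4 + h * t ^ 2 + E t)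
    (g : ℝ)
    (hg : g = sInf ((fun t => -E t / t ^ 2 - β * t ^ 2) ''
      (Set.Icc (-1 : ℝ) 1 \ {0}))) :
    (h < g →
      (∀ t ∈ Set.Icc (-1 : ℝ) 1, F t ≤ F 0) ∧
      (∀ t ∈ Set.Icc (-1 : ℝ) 1, (∀ s ∈ Set.Icc (-1 : ℝ) 1, F s ≤ F t) → t = 0)) ∧
    (1 / 12 < β → g < h → ¬ (∀ s ∈ Set.Icc (-1 : ℝ) 1, F s ≤ F 0)) := by
  have hF0 : F 0 = 0 := by rw [hF, hE]; norm_num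
  -- E t ≤ 0 on [-1,1]
  have hEle : ∀ t ∈ Set.Icc (-1:ℝ) 1, E t ≤ 0 := by
    intro t ht
    rw [hE]
    rcases eq_or_lt_of_le ht.1 with h1 | h1
    · -- t = -1
      rw [← h1]; norm_num
      positivity
    rcases eq_or_lt_of_le ht.2 with h2 | h2
    · -- t = 1
      rw [h2]; norm_num
      positivity
    · have hp : (0:ℝ) < 1 + t := by linarith
      have hq : (0:ℝ) < 1 - t := by linarith
      have l1 : Real.log (1 / (1 + t)) ≤ 1 / (1 + t) - 1 :=
        Real.log_le_sub_one_of_pos (by positivity)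
      have l2 : Real.log (1 / (1 - t)) ≤ 1 / (1 - t) - 1 :=
        Real.log_le_sub_one_of_pos (by positivity)
      rw [Real.log_div one_ne_zero (ne_of_gt hp), Real.log_one] at l1
      rw [Real.log_div one_ne_zero (ne_of_gt hq), Real.log_one] at l2
      -- log(1+t) ≥ 1 - 1/(1+t) = t/(1+t), so (1+t) log(1+t) ≥ t
      have k1 : t ≤ (1 + t) * Real.log (1 + t) := by
        have : 1 - 1 / (1 + t) ≤ Real.log (1 + t) := by linarith
        have := mul_le_mul_of_nonneg_left this (le_of_lt hp)
        calc t = (1 + t) * (1 - 1 / (1 + t)) := by field_simp; ring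
          _ ≤ (1 + t) * Real.log (1 + t) := this
      have k2 : -t ≤ (1 - t) * Real.log (1 - t) := by
        have : 1 - 1 / (1 - t) ≤ Real.log (1 - t) := by linarith
        have := mul_le_mul_of_nonneg_left this (le_of_lt hq)
        calc -t = (1 - t) * (1 - 1 / (1 - t)) := by field_simp; ring
          _ ≤ (1 - t) * Real.log (1 - t) := this
      nlinarith
  set S := ((fun t => -E t / t ^ 2 - β * t ^ 2) '' (Set.Icc (-1 : ℝ) 1 \ {0}))
  have hbdd : BddBelow S := by
    refine ⟨-β, ?_⟩
    rintro x ⟨t, ⟨ht, ht0⟩, rfl⟩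
    have h1 : (0:ℝ) ≤ -E t / t ^ 2 :=
      div_nonneg (by linarith [hEle t ht]) (sq_nonneg t)
    have h2 : t ^ 2 ≤ 1 := by nlinarith [ht.1, ht.2]
    have : β * t ^ 2 ≤ β := by nlinarith
    simp only
    linarith
  have hne : S.Nonempty := ⟨_, ⟨1, ⟨⟨by norm_num, le_refl 1⟩, by norm_num⟩, rfl⟩⟩
  have key : ∀ t : ℝ, t ≠ 0 → F t = t ^ 2 * (h - (-E t / t ^ 2 - β * t ^ 2)) := by
    intro t ht
    rw [hF]
    field_simp
    ring
  constructor
  · intro hlt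
    have main : ∀ t ∈ Set.Icc (-1:ℝ) 1, t ≠ 0 → F t < F 0 := by
      intro t ht ht0
      have hmem : (-E t / t ^ 2 - β * t ^ 2) ∈ S := ⟨t, ⟨ht, ht0⟩, rfl⟩
      have hle : g ≤ -E t / t ^ 2 - β * t ^ 2 := hg ▸ csInf_le hbdd hmem
      have ht2 : 0 < t ^ 2 := by positivity
      rw [key t ht0, hF0]
      nlinarith
    constructor
    · intro t ht
      by_cases ht0 : t = 0
      · rw [ht0]
      · exact le_of_lt (main t ht ht0)
    · intro t ht hmax
      by_contra ht0
      have h1 := hmax 0 (by norm_num)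
      have h2 := main t ht ht0
      linarith
  · intro _ hgh
    obtain ⟨x, ⟨t, ⟨ht, ht0⟩, rfl⟩, hxh⟩ := exists_lt_of_csInf_lt hne (hg ▸ hgh)
    intro hc
    have h1 := hc t ht
    have ht0' : t ≠ 0 := ht0
    have ht2 : (0:ℝ) < t ^ 2 := by positivity
    rw [key t ht0, hF0] at h1
    simp only at hxh
    nlinarith
end

section
/- Let t_* = 9/10, E(t) = −((1+t)/2) log(1+t) − ((1−t)/2) log(1−t) (so E'(t) = −atanh(t)), and set β = (3t_*²/2 + 5E(t_*) − t_* E'(t_*)) / t_*^6 and h = (−2t_*² − 6E(t_*) + t_* E'(t_*)) / t_*^5. Define F(t) = β t^6 + h t^5 + t²/2 + E(t) on [−1,1]. Then F(0) = F(t_*) = 0 and F(t) < 0 for all t ∈ [−1,1] ∖ {0, t_*}; moreover F'(0) = F''(0) = F'''(0) = 0 with F^{(4)}(0) < 0, and F'(t_*) = 0 with F''(t_*) < 0. (In other words, the associated function of the six-spin model has exactly two maximizers, 0 being 4-regular and t_* = 0.9 being 2-regular.) -/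
open Real Set

private lemma mylog_low (x : ℝ) (h0 : 0 ≤ x) (h1 : x < 1) :
    2*(x + x^3/3 + x^5/5 + x^7/7 + x^9/9) ≤ Real.log (1+x) - Real.log (1-x) := by
  set f : ℝ → ℝ := fun y => Real.log (1+y) - Real.log (1-y) - 2*(y + y^3/3 + y^5/5 + y^7/7 + y^9/9) with hf
  have hd : ∀ y ∈ Ioo (0:ℝ) 1, HasDerivAt f (1/(1+y) + 1/(1-y) - 2*(1 + y^2 + y^4 + y^6 + y^8)) y := by
    intro y hy
    have h1y : (0:ℝ) < 1 + y := by linarith [hy.1]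
    have h2y : (0:ℝ) < 1 - y := by linarith [hy.2]
    have d1 : HasDerivAt (fun y : ℝ => Real.log (1+y)) (1/(1+y)) y := by
      have := (Real.hasDerivAt_log h1y.ne').comp y ((hasDerivAt_id y).const_add 1)
      simpa [Function.comp_def] using this
    have d2 : HasDerivAt (fun y : ℝ => Real.log (1-y)) (-(1/(1-y))) y := by
      have := (Real.hasDerivAt_log h2y.ne').comp y ((hasDerivAt_id y).const_sub 1)
      simpa [div_eq_mul_inv, Function.comp_def] using this
    have d3 : HasDerivAt (fun y : ℝ => 2*(y + y^3/3 + y^5/5 + y^7/7 + y^9/9))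
        (2*(1 + y^2 + y^4 + y^6 + y^8)) y := by
      have : HasDerivAt (fun y : ℝ => y + y^3/3 + y^5/5 + y^7/7 + y^9/9)
          (1 + y^2 + y^4 + y^6 + y^8) y := by
        have p3 := hasDerivAt_pow 3 y
        have p5 := hasDerivAt_pow 5 y
        have p7 := hasDerivAt_pow 7 y
        have p9 := hasDerivAt_pow 9 y
        have := (((hasDerivAt_id y).add (p3.div_const 3)).add (p5.div_const 5)).add
          ((p7.div_const 7))
        have := this.add (p9.div_const 9)
        refine this.congr_deriv ?_
        push_cast; ring
      simpa using this.const_mul 2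
    have := (d1.sub d2).sub d3
    refine this.congr_deriv ?_
    ring
  have hmono : MonotoneOn f (Ico (0:ℝ) 1) := by
    have hint : interior (Ico (0:ℝ) 1) = Ioo 0 1 := interior_Ico
    apply monotoneOn_of_deriv_nonneg (convex_Ico 0 1)
    · apply ContinuousOn.sub
      apply ContinuousOn.sub
      · apply ContinuousOn.log (by fun_prop)
        intro y hy; simp only [mem_Ico] at hy; nlinarith [hy.1]
      · apply ContinuousOn.log (by fun_prop)
        intro y hy; simp only [mem_Ico] at hy; nlinarith [hy.2]
      · fun_prop
    · rw [hint]; intro y hy; exact ((hd y hy).differentiableAt).differentiableWithinAt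
    · rw [hint]; intro y hy
      rw [(hd y hy).deriv]
      have h1y : (0:ℝ) < 1 + y := by linarith [hy.1]
      have h2y : (0:ℝ) < 1 - y := by linarith [hy.2]
      rw [div_add_div _ _ h1y.ne' h2y.ne']
      have : (1 * (1 - y) + (1 + y) * 1)/((1+y)*(1-y)) - 2*(1 + y^2 + y^4 + y^6 + y^8)
          = 2*y^10/((1+y)*(1-y)) := by
        field_simp
        ring
      rw [this]
      exact div_nonneg (by positivity) (mul_pos h1y h2y).le
  have h0' : f 0 ≤ f x := hmono (by simp) (by simp [h0, h1]) h0
  have : f 0 = 0 := by simp [hf]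
  simp only [hf] at h0' this
  linarith [h0', this]

private lemma mylog_up (x : ℝ) (h0 : 0 ≤ x) (h1 : x < 1) :
    Real.log (1+x) - Real.log (1-x) ≤ 2*(x + x^3/3 + x^5/5 + x^7/7) + 2*x^9/(9*(1-x^2)) := by
  set f : ℝ → ℝ := fun y => 2*(y + y^3/3 + y^5/5 + y^7/7) + 2*y^9/(9*(1-y^2))
    - (Real.log (1+y) - Real.log (1-y)) with hf
  have hd : ∀ y ∈ Ioo (0:ℝ) 1, HasDerivAt f
      (2*(1 + y^2 + y^4 + y^6) + (18*y^8*(9*(1-y^2)) - 2*y^9*(-18*y))/(9*(1-y^2))^2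
        - (1/(1+y) + 1/(1-y))) y := by
    intro y hy
    have h1y : (0:ℝ) < 1 + y := by linarith [hy.1]
    have h2y : (0:ℝ) < 1 - y := by linarith [hy.2]
    have hden : (9:ℝ)*(1-y^2) ≠ 0 := by nlinarith [hy.1, hy.2]
    have d1 : HasDerivAt (fun y : ℝ => Real.log (1+y)) (1/(1+y)) y := by
      have := (Real.hasDerivAt_log h1y.ne').comp y ((hasDerivAt_id y).const_add 1)
      simpa [Function.comp_def] using this
    have d2 : HasDerivAt (fun y : ℝ => Real.log (1-y)) (-(1/(1-y))) y := by
      have := (Real.hasDerivAt_log h2y.ne').comp y ((hasDerivAt_id y).const_sub 1)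
      simpa [div_eq_mul_inv, Function.comp_def] using this
    have d3 : HasDerivAt (fun y : ℝ => 2*(y + y^3/3 + y^5/5 + y^7/7)) (2*(1 + y^2 + y^4 + y^6)) y := by
      have p3 := hasDerivAt_pow 3 y
      have p5 := hasDerivAt_pow 5 y
      have p7 := hasDerivAt_pow 7 y
      have := (((hasDerivAt_id y).add (p3.div_const 3)).add (p5.div_const 5)).add (p7.div_const 7)
      have := this.const_mul 2
      refine this.congr_deriv ?_
      push_cast; ring
    have dnum : HasDerivAt (fun y : ℝ => 2*y^9) (18*y^8) y := by
      have := (hasDerivAt_pow 9 y).const_mul 2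
      refine this.congr_deriv ?_
      push_cast; ring
    have dden : HasDerivAt (fun y : ℝ => 9*(1-y^2)) (-18*y) y := by
      have := ((hasDerivAt_pow 2 y).const_sub 1).const_mul 9
      refine this.congr_deriv ?_
      push_cast; ring
    have d4 := dnum.div dden hden
    have := (d3.add d4).sub (d1.sub d2)
    refine this.congr_deriv ?_
    ring
  have hmono : MonotoneOn f (Ico (0:ℝ) 1) := by
    have hint : interior (Ico (0:ℝ) 1) = Ioo 0 1 := interior_Ico
    apply monotoneOn_of_deriv_nonneg (convex_Ico 0 1)
    · apply ContinuousOn.sub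
      · apply ContinuousOn.add (by fun_prop)
        apply ContinuousOn.div (by fun_prop) (by fun_prop)
        intro y hy; simp only [mem_Ico] at hy; nlinarith [hy.1, hy.2]
      · apply ContinuousOn.sub
        · apply ContinuousOn.log (by fun_prop)
          intro y hy; simp only [mem_Ico] at hy; nlinarith [hy.1]
        · apply ContinuousOn.log (by fun_prop)
          intro y hy; simp only [mem_Ico] at hy; nlinarith [hy.2]
    · rw [hint]; intro y hy; exact ((hd y hy).differentiableAt).differentiableWithinAt
    · rw [hint]; intro y hy
      rw [(hd y hy).deriv]
      have h1y : (0:ℝ) < 1 + y := by linarith [hy.1]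
      have h2y : (0:ℝ) < 1 - y := by linarith [hy.2]
      have : 2*(1 + y^2 + y^4 + y^6) + (18*y^8*(9*(1-y^2)) - 2*y^9*(-18*y))/(9*(1-y^2))^2
          - (1/(1+y) + 1/(1-y)) = 4*y^10/(9*((1+y)*(1-y))^2) := by
        have hne : ((1:ℝ)+y)*(1-y) ≠ 0 := (mul_pos h1y h2y).ne'
        have hsq : (1:ℝ) - y^2 ≠ 0 := by nlinarith
        field_simp
        ring
      rw [this]
      exact div_nonneg (by positivity) (by positivity)
  have h0' : f 0 ≤ f x := hmono (by simp) (by simp [h0, h1]) h0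
  have hz : f 0 = 0 := by simp [hf]
  simp only [hf] at h0' hz
  linarith [h0', hz]


private lemma log1p_deriv (t : ℝ) (h1p : (0:ℝ) < 1+t) :
    HasDerivAt (fun y : ℝ => Real.log (1+y)) (1/(1+t)) t := by
  have := (Real.hasDerivAt_log h1p.ne').comp t ((hasDerivAt_id t).const_add 1)
  simpa [Function.comp_def] using this

private lemma log1m_deriv (t : ℝ) (h2p : (0:ℝ) < 1-t) :
    HasDerivAt (fun y : ℝ => Real.log (1-y)) (-(1/(1-t))) t := by
  have := (Real.hasDerivAt_log h2p.ne').comp t ((hasDerivAt_id t).const_sub 1)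
  simpa [div_eq_mul_inv, Function.comp_def] using this

private lemma dF_aux (β h : ℝ) (t : ℝ) (h1t : -1 < t) (h2t : t < 1) :
    HasDerivAt (fun y : ℝ => β*y^6 + h*y^5 + y^2/2 +
      (-((1 + y) / 2) * Real.log (1 + y) - ((1 - y) / 2) * Real.log (1 - y)))
      (6*β*t^5 + 5*h*t^4 + t + (Real.log (1-t) - Real.log (1+t))/2) t := by
  have h1p : (0:ℝ) < 1+t := by linarith
  have h2p : (0:ℝ) < 1-t := by linarith
  have d1 := log1p_deriv t h1p
  have d2 := log1m_deriv t h2p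
  have dE1 : HasDerivAt (fun y : ℝ => -((1+y)/2) * Real.log (1+y))
      ((-(1/2))*Real.log (1+t) + (-((1+t)/2))*(1/(1+t))) t := by
    have dc : HasDerivAt (fun y : ℝ => -((1+y)/2)) (-(1/2)) t := by
      have := (((hasDerivAt_id t).const_add 1).div_const 2).neg
      refine this.congr_deriv ?_ <;> norm_num
    exact dc.mul d1
  have dE2 : HasDerivAt (fun y : ℝ => ((1-y)/2) * Real.log (1-y))
      ((-(1/2))*Real.log (1-t) + ((1-t)/2)*(-(1/(1-t)))) t := by
    have dc : HasDerivAt (fun y : ℝ => (1-y)/2) (-(1/2)) t := by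
      have := (((hasDerivAt_id t).const_sub 1).div_const 2)
      refine this.congr_deriv ?_
      norm_num
    exact dc.mul d2
  have dp : HasDerivAt (fun y : ℝ => β*y^6 + h*y^5 + y^2/2) (6*β*t^5+5*h*t^4+t) t := by
    have p6 := (hasDerivAt_pow 6 t).const_mul β
    have p5 := (hasDerivAt_pow 5 t).const_mul h
    have p2 := (hasDerivAt_pow 2 t).div_const 2
    have := (p6.add p5).add p2
    refine this.congr_deriv ?_
    push_cast; ring
  have := dp.add (dE1.sub dE2)
  refine this.congr_deriv ?_
  field_simp
  ring

private lemma dG1_aux (β h : ℝ) (t : ℝ) (h1t : -1 < t) (h2t : t < 1) :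
    HasDerivAt (fun y : ℝ => 6*β*y^5 + 5*h*y^4 + y + (Real.log (1-y) - Real.log (1+y))/2)
      (30*β*t^4 + 20*h*t^3 + 1 - (1/(2*(1-t)) + 1/(2*(1+t)))) t := by
  have h1p : (0:ℝ) < 1+t := by linarith
  have h2p : (0:ℝ) < 1-t := by linarith
  have d1 := log1p_deriv t h1p
  have d2 := log1m_deriv t h2p
  have p5 := (hasDerivAt_pow 5 t).const_mul (6*β)
  have p4 := (hasDerivAt_pow 4 t).const_mul (5*h)
  have := ((p5.add p4).add (hasDerivAt_id t)).add ((d2.sub d1).div_const 2)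
  refine this.congr_deriv ?_
  push_cast
  field_simp
  ring

private lemma dG2_aux (β h : ℝ) (t : ℝ) (h1t : -1 < t) (h2t : t < 1) :
    HasDerivAt (fun y : ℝ => 30*β*y^4 + 20*h*y^3 + 1 - (1/(2*(1-y)) + 1/(2*(1+y))))
      (120*β*t^3 + 60*h*t^2 - (1/(2*(1-t)^2) - 1/(2*(1+t)^2))) t := by
  have h1p : (0:ℝ) < 1+t := by linarith
  have h2p : (0:ℝ) < 1-t := by linarith
  have d1 : HasDerivAt (fun y : ℝ => 1/(2*(1-y))) (1/(2*(1-t)^2)) t := by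
    have dden : HasDerivAt (fun y : ℝ => 2*(1-y)) (-2 : ℝ) t := by
      have := ((hasDerivAt_id t).const_sub 1).const_mul (2:ℝ)
      refine this.congr_deriv ?_; norm_num
    have := (hasDerivAt_const t (1:ℝ)).div dden (by positivity)
    refine this.congr_deriv ?_
    field_simp
    ring
  have d2 : HasDerivAt (fun y : ℝ => 1/(2*(1+y))) (-(1/(2*(1+t)^2))) t := by
    have dden : HasDerivAt (fun y : ℝ => 2*(1+y)) (2 : ℝ) t := by
      have := ((hasDerivAt_id t).const_add 1).const_mul (2:ℝ)
      refine this.congr_deriv ?_; norm_num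
    have := (hasDerivAt_const t (1:ℝ)).div dden (by positivity)
    refine this.congr_deriv ?_
    field_simp
    ring
  have p4 := (hasDerivAt_pow 4 t).const_mul (30*β)
  have p3 := (hasDerivAt_pow 3 t).const_mul (20*h)
  have := (((p4.add p3).add (hasDerivAt_const t (1:ℝ))).sub (d1.add d2))
  refine this.congr_deriv ?_
  push_cast
  ring

private lemma dG3_aux (β h : ℝ) :
    HasDerivAt (fun y : ℝ => 120*β*y^3 + 60*h*y^2 - (1/(2*(1-y)^2) - 1/(2*(1+y)^2))) (-2 : ℝ) 0 := by
  have d1 : HasDerivAt (fun y : ℝ => 1/(2*(1-y)^2)) (1 : ℝ) 0 := by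
    have h2 : HasDerivAt (fun y : ℝ => (1-y)) (-1 : ℝ) 0 := by
      have := ((hasDerivAt_id (0:ℝ)).const_sub 1)
      refine this.congr_deriv ?_ <;> norm_num
    have dden : HasDerivAt (fun y : ℝ => 2*(1-y)^2) (-4 : ℝ) 0 := by
      have := ((h2.pow 2).const_mul (2:ℝ))
      refine this.congr_deriv ?_ <;> norm_num
    have := (hasDerivAt_const (0:ℝ) (1:ℝ)).div dden (by norm_num)
    refine this.congr_deriv ?_
    norm_num
  have d2 : HasDerivAt (fun y : ℝ => 1/(2*(1+y)^2)) (-1 : ℝ) 0 := by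
    have h2 : HasDerivAt (fun y : ℝ => (1+y)) (1 : ℝ) 0 := by
      have := ((hasDerivAt_id (0:ℝ)).const_add 1)
      refine this.congr_deriv ?_ <;> norm_num
    have dden : HasDerivAt (fun y : ℝ => 2*(1+y)^2) (4 : ℝ) 0 := by
      have := ((h2.pow 2).const_mul (2:ℝ))
      refine this.congr_deriv ?_ <;> norm_num
    have := (hasDerivAt_const (0:ℝ) (1:ℝ)).div dden (by norm_num)
    refine this.congr_deriv ?_
    norm_num
  have p3 := (hasDerivAt_pow 3 (0:ℝ)).const_mul (120*β)
  have p2 := (hasDerivAt_pow 2 (0:ℝ)).const_mul (60*h)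
  have := ((p3.add p2).sub (d1.sub d2))
  refine this.congr_deriv ?_
  norm_num


private lemma keyA (β h x L : ℝ) (hb : β < 1257673/10000000) (hh2 : 386019/10000000 < h)
    (hx1 : -1 < x) (hx0 : x < 0)
    (hlow : 2*((-x) + (-x)^3/3 + (-x)^5/5 + (-x)^7/7 + (-x)^9/9) ≤ L) :
    0 < 6*β*x^5 + 5*h*x^4 + x + L/2 := by
  have hs0 : (0:ℝ) < -x := by linarith
  have key : 0 < (-x)^3/3 + 5*(386019/10000000)*(-x)^4 + (-x)^5/5 + (-x)^7/7 + (-x)^9/9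
      - 6*(1257673/10000000)*(-x)^5 := by
    nlinarith [pow_pos hs0 3, pow_pos hs0 4, pow_pos hs0 5, pow_pos hs0 7, pow_pos hs0 9,
      mul_nonneg (pow_pos hs0 5).le (sq_nonneg (-x-1)), mul_nonneg (pow_pos hs0 3).le (sq_nonneg (-x-1))]
  nlinarith [key, hlow, mul_pos (sub_pos.2 hb) (pow_pos hs0 5),
    mul_pos (sub_pos.2 hh2) (pow_pos hs0 4)]

private lemma keyB (β h x L : ℝ) (hb : β < 1257673/10000000) (hh2 : h < 19301/500000)
    (hx0 : 0 < x) (hx6 : x < 3/5)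
    (hlow : 2*(x + x^3/3 + x^5/5 + x^7/7 + x^9/9) ≤ L) :
    6*β*x^5 + 5*h*x^4 + x + (-L)/2 < 0 := by
  have key : 0 < x^3/3 + x^5/5 + x^7/7 - 6*(1257673/10000000)*x^5 - 5*(19301/500000)*x^4 := by
    nlinarith [pow_pos hx0 3, pow_pos hx0 4, pow_pos hx0 5, pow_pos hx0 7,
      mul_pos (mul_pos hx0 hx0) hx0, sq_nonneg (x-3/5),
      mul_nonneg (pow_pos hx0 3).le (mul_nonneg (sub_nonneg.2 hx6.le) (sub_nonneg.2 hx6.le))]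
  nlinarith [key, hlow, mul_pos (sub_pos.2 hb) (pow_pos hx0 5),
    mul_pos (sub_pos.2 hh2) (pow_pos hx0 4), pow_pos hx0 9]

private lemma keyC (β h x : ℝ) (hb : 1257671/10000000 < β) (hh2 : 386019/10000000 < h)
    (hxa : 3/5 ≤ x) (hxb : x ≤ 41/50) :
    1 ≤ (30*β*x^4 + 20*h*x^3 + 1)*((1+x)*(1-x)) := by
  have hx0 : (0:ℝ) < x := by linarith
  have h1 : (0:ℝ) < 1-x := by linarith
  have h2 : (0:ℝ) < 1+x := by linarith
  have key : x^2 ≤ (30*(1257671/10000000)*x^4 + 20*(386019/10000000)*x^3)*(1-x^2) := by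
    nlinarith [mul_nonneg (sub_nonneg.2 hxa) (sub_nonneg.2 hxb), sq_nonneg (x - 7/10),
      mul_nonneg (mul_nonneg (sub_nonneg.2 hxa) (sub_nonneg.2 hxb)) (sq_nonneg x),
      mul_nonneg (mul_nonneg (sub_nonneg.2 hxa) (sub_nonneg.2 hxb)) (sq_nonneg (x-7/10))]
  nlinarith [key, mul_nonneg (mul_nonneg (sub_pos.2 hb).le (pow_pos hx0 4).le) (mul_pos h2 h1).le,
    mul_nonneg (mul_nonneg (sub_pos.2 hh2).le (pow_pos hx0 3).le) (mul_pos h2 h1).le]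

private lemma keyDE (β h x : ℝ) (hb : β < 1257673/10000000) (hh2 : h < 19301/500000)
    (hxa : 41/50 ≤ x) (hxb : x ≤ 1) :
    (6*β*((9/10)^4+(9/10)^3*x+(9/10)^2*x^2+(9/10)*x^3+x^4)
      + 5*h*((9/10)^3+(9/10)^2*x+(9/10)*x^2+x^3) + 1)*(1-(9/10)*x) < 1 := by
  have hx0 : (0:ℝ) < x := by linarith
  have hax : (0:ℝ) < 1-(9/10)*x := by linarith
  have key : (6*(1257673/10000000)*((9/10)^4+(9/10)^3*x+(9/10)^2*x^2+(9/10)*x^3+x^4)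
      + 5*(19301/500000)*((9/10)^3+(9/10)^2*x+(9/10)*x^2+x^3) + 1)*(1-9/10*x) < 1 := by
    nlinarith [mul_nonneg (sub_nonneg.2 hxa) (sub_nonneg.2 hxb), sq_nonneg (x-9/10),
      mul_nonneg (mul_nonneg (sub_nonneg.2 hxa) (sub_nonneg.2 hxb)) (sq_nonneg x)]
  have hS5 : (0:ℝ) < (9/10)^4+(9/10)^3*x+(9/10)^2*x^2+(9/10)*x^3+x^4 := by positivity
  have hS4 : (0:ℝ) < (9/10)^3+(9/10)^2*x+(9/10)*x^2+x^3 := by positivity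
  nlinarith [key, mul_pos (mul_pos (sub_pos.2 hb) hS5) hax,
    mul_pos (mul_pos (sub_pos.2 hh2) hS4) hax]





set_option maxHeartbeats 4000000 in
/-- The six-spin interaction model: with `t_* = 9/10` and the explicit parameters
`β, h`, the function `F(t) = βt⁶ + ht⁵ + t²/2 + E(t)` has exactly the two maximizers
`0` and `t_*` (with `F(0) = F(t_*) = 0` and `F < 0` elsewhere on `[−1,1]`), where `0`
is 4-regular and `t_*` is 2-regular.  Here `E'(t) = −atanh(t)` with
`atanh t = log((1+t)/(1−t))/2`. -/
theorem six_spin_two_maximizers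
    (E : ℝ → ℝ)
    (hE : ∀ t, E t = -((1 + t) / 2) * Real.log (1 + t) -
      ((1 - t) / 2) * Real.log (1 - t))
    (atanh : ℝ → ℝ) (hatanh : ∀ t, atanh t = Real.log ((1 + t) / (1 - t)) / 2)
    (ts : ℝ) (hts : ts = 9 / 10)
    (β h : ℝ)
    (hβ : β = (3 * ts ^ 2 / 2 + 5 * E ts - ts * (-(atanh ts))) / ts ^ 6)
    (hh : h = (-2 * ts ^ 2 - 6 * E ts + ts * (-(atanh ts))) / ts ^ 5)
    (F : ℝ → ℝ)
    (hF : ∀ t, F t = β * t ^ 6 + h * t ^ 5 + t ^ 2 / 2 + E t) :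
    F 0 = 0 ∧ F ts = 0 ∧
    (∀ t ∈ Set.Icc (-1 : ℝ) 1, t ≠ 0 → t ≠ ts → F t < 0) ∧
    deriv F 0 = 0 ∧ iteratedDeriv 2 F 0 = 0 ∧ iteratedDeriv 3 F 0 = 0 ∧
    iteratedDeriv 4 F 0 < 0 ∧
    deriv F ts = 0 ∧ iteratedDeriv 2 F ts < 0 := by
  subst hts
  -- numeric bounds on log 19 and log 10
  have l2lo := Real.log_two_gt_d9
  have l2hi := Real.log_two_lt_d9
  have e19 : Real.log (1+3/35) - Real.log (1-3/35) = Real.log 19 - 4*Real.log 2 := by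
    rw [show (1:ℝ)+3/35 = (19*2)/35 by norm_num, show (1:ℝ)-3/35 = (2^5:ℝ)/35 by norm_num,
      Real.log_div (by norm_num) (by norm_num), Real.log_div (by norm_num) (by norm_num),
      Real.log_mul (by norm_num) (by norm_num), Real.log_pow]
    push_cast; ring
  have e10 : Real.log (1+1/9) - Real.log (1-1/9) = Real.log 10 - 3*Real.log 2 := by
    rw [show (1:ℝ)+1/9 = (10:ℝ)/9 by norm_num, show (1:ℝ)-1/9 = ((2:ℝ)^3)/9 by norm_num,
      Real.log_div (by norm_num) (by norm_num), Real.log_div (by norm_num) (by norm_num),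
      Real.log_pow]
    push_cast; ring
  have s19lo := mylog_low (3/35) (by norm_num) (by norm_num)
  have s19hi := mylog_up (3/35) (by norm_num) (by norm_num)
  have s10lo := mylog_low (1/9) (by norm_num) (by norm_num)
  have s10hi := mylog_up (1/9) (by norm_num) (by norm_num)
  rw [e19] at s19lo s19hi
  rw [e10] at s10lo s10hi
  norm_num at s19lo s19hi s10lo s10hi
  have l19lo : (2.9444389781:ℝ) < Real.log 19 := by linarith
  have l19hi : Real.log 19 < 2.9444389802 := by linarith
  have l10lo : (2.3025850922:ℝ) < Real.log 10 := by linarith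
  have l10hi : Real.log 10 < 2.3025850938 := by linarith
  -- closed forms
  have hAts : atanh (9/10) = Real.log 19 / 2 := by
    rw [hatanh, show ((1:ℝ)+9/10)/(1-9/10) = 19 by norm_num]
  have hEts : E (9/10) = -(19/20)*Real.log 19 + Real.log 10 := by
    rw [hE, show (1:ℝ)+9/10 = 19/10 by norm_num, show (1:ℝ)-9/10 = 1/10 by norm_num,
      Real.log_div (by norm_num) (by norm_num),
      show ((1:ℝ)/10) = (10:ℝ)⁻¹ by norm_num, Real.log_inv]
    ring
  have hβ' : β = (1215/1000 - (43/10)*Real.log 19 + 5*Real.log 10) * (1000000/531441) := by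
    rw [hβ, hEts, hAts]; ring
  have hh' : h = (-162/100 + (21/4)*Real.log 19 - 6*Real.log 10) * (100000/59049) := by
    rw [hh, hEts, hAts]; ring
  have b_lo : (1257671/10000000:ℝ) < β := by rw [hβ']; linarith
  have b_hi : β < 1257673/10000000 := by rw [hβ']; linarith
  have h_lo : (386019/10000000:ℝ) < h := by rw [hh']; linarith
  have h_hi : h < 19301/500000 := by rw [hh']; linarith
  -- continuity of F
  have c1 : Continuous (fun t:ℝ => (1+t)*Real.log (1+t)) :=
    Real.continuous_mul_log.comp (continuous_const.add continuous_id)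
  have c2 : Continuous (fun t:ℝ => (1-t)*Real.log (1-t)) :=
    Real.continuous_mul_log.comp (continuous_const.sub continuous_id)
  have hFc : Continuous F := by
    have hFr : F = fun t => β*t^6+h*t^5+t^2/2 - ((1+t)*Real.log (1+t))/2
        - ((1-t)*Real.log (1-t))/2 := by
      funext t; rw [hF, hE]; ring
    rw [hFr]
    exact ((((continuous_const.mul (continuous_pow 6)).add
      (continuous_const.mul (continuous_pow 5))).add
      ((continuous_pow 2).div_const 2)).sub (c1.div_const 2)).sub (c2.div_const 2)
  have hF2 : F = fun t => β*t^6 + h*t^5 + t^2/2 +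
      (-((1 + t) / 2) * Real.log (1 + t) - ((1 - t) / 2) * Real.log (1 - t)) := by
    funext t; rw [hF, hE]
  have hdF : ∀ t : ℝ, -1 < t → t < 1 → HasDerivAt F
      (6*β*t^5 + 5*h*t^4 + t + (Real.log (1-t) - Real.log (1+t))/2) t := by
    intro t h1t h2t
    rw [hF2]
    exact dF_aux β h t h1t h2t
  have hderiv1 : ∀ t ∈ Ioo (-1:ℝ) 1, deriv F t
      = 6*β*t^5 + 5*h*t^4 + t + (Real.log (1-t) - Real.log (1+t))/2 :=
    fun t ht => (hdF t ht.1 ht.2).deriv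
  have hev1 : ∀ t ∈ Ioo (-1:ℝ) 1, deriv F =ᶠ[nhds t]
      (fun y => 6*β*y^5 + 5*h*y^4 + y + (Real.log (1-y) - Real.log (1+y))/2) :=
    fun t ht => Filter.eventuallyEq_of_mem (isOpen_Ioo.mem_nhds ht) hderiv1
  have hderiv2 : ∀ t ∈ Ioo (-1:ℝ) 1, deriv (deriv F) t
      = 30*β*t^4 + 20*h*t^3 + 1 - (1/(2*(1-t)) + 1/(2*(1+t))) := by
    intro t ht
    rw [(hev1 t ht).deriv_eq, (dG1_aux β h t ht.1 ht.2).deriv]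
  have hev2 : ∀ t ∈ Ioo (-1:ℝ) 1, deriv (deriv F) =ᶠ[nhds t]
      (fun y => 30*β*y^4 + 20*h*y^3 + 1 - (1/(2*(1-y)) + 1/(2*(1+y)))) :=
    fun t ht => Filter.eventuallyEq_of_mem (isOpen_Ioo.mem_nhds ht) hderiv2
  have hderiv3 : ∀ t ∈ Ioo (-1:ℝ) 1, deriv (deriv (deriv F)) t
      = 120*β*t^3 + 60*h*t^2 - (1/(2*(1-t)^2) - 1/(2*(1+t)^2)) := by
    intro t ht
    rw [(hev2 t ht).deriv_eq, (dG2_aux β h t ht.1 ht.2).deriv]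
  have hev3 : ∀ t ∈ Ioo (-1:ℝ) 1, deriv (deriv (deriv F)) =ᶠ[nhds t]
      (fun y => 120*β*y^3 + 60*h*y^2 - (1/(2*(1-y)^2) - 1/(2*(1+y)^2))) :=
    fun t ht => Filter.eventuallyEq_of_mem (isOpen_Ioo.mem_nhds ht) hderiv3
  have hmem0 : (0:ℝ) ∈ Ioo (-1:ℝ) 1 := by constructor <;> norm_num
  have hmem9 : (9/10:ℝ) ∈ Ioo (-1:ℝ) 1 := by constructor <;> norm_num
  -- conclusion parts about derivatives
  have hd0 : deriv F 0 = 0 := by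
    rw [hderiv1 0 hmem0]
    norm_num
  have hd20 : iteratedDeriv 2 F 0 = 0 := by
    rw [iteratedDeriv_succ, iteratedDeriv_one, hderiv2 0 hmem0]
    norm_num
  have hd30 : iteratedDeriv 3 F 0 = 0 := by
    rw [iteratedDeriv_succ, iteratedDeriv_succ, iteratedDeriv_one, hderiv3 0 hmem0]
    norm_num
  have hd40 : iteratedDeriv 4 F 0 < 0 := by
    rw [iteratedDeriv_succ, iteratedDeriv_succ, iteratedDeriv_succ, iteratedDeriv_one,
      (hev3 0 hmem0).deriv_eq, (dG3_aux β h).deriv]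
    norm_num
  have hd9 : deriv F (9/10) = 0 := by
    rw [hderiv1 (9/10) hmem9, show (1:ℝ)-9/10 = (10:ℝ)⁻¹ by norm_num,
      show (1:ℝ)+9/10 = 19/10 by norm_num, Real.log_inv,
      Real.log_div (by norm_num) (by norm_num), hβ', hh']
    ring
  have hd29 : iteratedDeriv 2 F (9/10) < 0 := by
    rw [iteratedDeriv_succ, iteratedDeriv_one, hderiv2 (9/10) hmem9]
    norm_num
    linarith [b_hi, h_hi]
  have hF0 : F 0 = 0 := by
    rw [hF, hE]
    norm_num
  have hF9 : F (9/10) = 0 := by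
    rw [hF, hEts, hβ', hh']
    ring
  -- Region A : F strictly increasing on [-1,0]
  have regA : StrictMonoOn F (Icc (-1:ℝ) 0) := by
    apply strictMonoOn_of_deriv_pos (convex_Icc _ _) hFc.continuousOn
    intro x hx
    rw [interior_Icc] at hx
    obtain ⟨hx1, hx0⟩ := hx
    rw [hderiv1 x ⟨hx1, by linarith⟩]
    have hs0 : (0:ℝ) < -x := by linarith
    have hlow := mylog_low (-x) hs0.le (by linarith)
    rw [show (1:ℝ)+(-x) = 1-x by ring, show (1:ℝ)-(-x) = 1+x by ring] at hlow
    exact keyA β h x _ b_hi h_lo hx1 hx0 hlow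
  -- Region B : F strictly decreasing on [0,3/5]
  have regB : StrictAntiOn F (Icc (0:ℝ) (3/5)) := by
    apply strictAntiOn_of_deriv_neg (convex_Icc _ _) hFc.continuousOn
    intro x hx
    rw [interior_Icc] at hx
    obtain ⟨hx0, hx6⟩ := hx
    rw [hderiv1 x ⟨by linarith, by linarith⟩]
    have hlow := mylog_low x hx0.le (by linarith)
    linarith [keyB β h x _ b_hi h_hi hx0 hx6 hlow]
  -- Region C : F convex on [3/5,41/50]
  have regC : ConvexOn ℝ (Icc (3/5:ℝ) (41/50)) F := by
    apply convexOn_of_deriv2_nonneg (convex_Icc _ _) hFc.continuousOn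
    · rw [interior_Icc]
      intro x hx
      exact (hdF x (by linarith [hx.1]) (by linarith [hx.2])).differentiableAt.differentiableWithinAt
    · rw [interior_Icc]
      intro x hx
      have hxm : x ∈ Ioo (-1:ℝ) 1 := ⟨by linarith [hx.1], by linarith [hx.2]⟩
      exact ((dG1_aux β h x hxm.1 hxm.2).differentiableAt.congr_of_eventuallyEq
        (hev1 x hxm)).differentiableWithinAt
    · rw [interior_Icc]
      intro x hx
      obtain ⟨hxa, hxb⟩ := hx
      have hxm : x ∈ Ioo (-1:ℝ) 1 := ⟨by linarith, by linarith⟩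
      have hit : deriv^[2] F x = deriv (deriv F) x := rfl
      rw [hit, hderiv2 x hxm]
      have h1 : (0:ℝ) < 1-x := by linarith
      have h2 : (0:ℝ) < 1+x := by linarith
      have hx0 : (0:ℝ) < x := by linarith
      have hrw : 1/(2*(1-x)) + 1/(2*(1+x)) = 1/((1+x)*(1-x)) := by
        field_simp; ring
      rw [hrw]
      have hdiv : 1/((1+x)*(1-x)) ≤ 30*β*x^4 + 20*h*x^3 + 1 := by
        rw [div_le_iff₀ (mul_pos h2 h1)]
        exact keyC β h x b_lo h_lo hxa.le hxb.le
      linarith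
  -- core polynomial fact for regions D and E
  have hkeyDE : ∀ x : ℝ, 41/50 ≤ x → x ≤ 1 →
      (6*β*((9/10)^4+(9/10)^3*x+(9/10)^2*x^2+(9/10)*x^3+x^4)
        + 5*h*((9/10)^3+(9/10)^2*x+(9/10)*x^2+x^3) + 1)*(1-(9/10)*x) < 1 :=
    fun x hxa hxb => keyDE β h x b_hi h_hi hxa hxb
  have hA2 : Real.log 19/2 = 6*β*(9/10)^5 + 5*h*(9/10)^4 + 9/10 := by
    rw [hβ', hh']; ring
  -- Region D : F strictly increasing on [41/50, 9/10]
  have regD : StrictMonoOn F (Icc (41/50:ℝ) (9/10)) := by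
    apply strictMonoOn_of_deriv_pos (convex_Icc _ _) hFc.continuousOn
    intro x hx
    rw [interior_Icc] at hx
    obtain ⟨hxa, hxb⟩ := hx
    rw [hderiv1 x ⟨by linarith, by linarith⟩]
    have hax : (0:ℝ) < 1-(9/10)*x := by linarith
    have h10 : (0:ℝ) < 10 - 9*x := by linarith
    have hlx : (0:ℝ) < 1-x := by linarith
    have hpx : (0:ℝ) < 1+x := by linarith
    set u := (9/10 - x)/(1 - (9/10)*x) with hu
    have hu0 : 0 ≤ u := div_nonneg (by linarith) hax.le
    have hu1 : u < 1 := by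
      rw [hu, div_lt_one hax]; linarith
    have hlow := mylog_low u hu0 hu1
    have e1 : (1:ℝ)+u = ((19/10)*(1-x))/(1-(9/10)*x) := by
      rw [hu]; field_simp [h10.ne']; ring
    have e2 : (1:ℝ)-u = ((1/10)*(1+x))/(1-(9/10)*x) := by
      rw [hu]; field_simp [h10.ne']; ring
    have l1 : Real.log (1+u) = Real.log (19/10) + Real.log (1-x) - Real.log (1-(9/10)*x) := by
      rw [e1, Real.log_div (by positivity) hax.ne', Real.log_mul (by norm_num) hlx.ne']
    have l2 : Real.log (1-u) = Real.log (1/10) + Real.log (1+x) - Real.log (1-(9/10)*x) := by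
      rw [e2, Real.log_div (by positivity) hax.ne', Real.log_mul (by norm_num) hpx.ne']
    have l3 : Real.log ((19:ℝ)/10) - Real.log (1/10) = Real.log 19 := by
      rw [Real.log_div (by norm_num) (by norm_num), Real.log_div (by norm_num) (by norm_num),
        Real.log_one]
      ring
    have hlow2 : 2*u ≤ Real.log 19 + (Real.log (1-x) - Real.log (1+x)) := by
      linarith [hlow, l1, l2, l3, pow_nonneg hu0 3, pow_nonneg hu0 5, pow_nonneg hu0 7,
        pow_nonneg hu0 9]
    have hupos : u*(1-(9/10)*x) = 9/10 - x := by
      rw [hu]; field_simp [h10.ne']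
    have hkey := hkeyDE x hxa.le (by linarith)
    have hT : 0 < 6*β*(x^5-(9/10)^5) + 5*h*(x^4-(9/10)^4) + (x-9/10) + u := by
      have hmul : (6*β*(x^5-(9/10)^5) + 5*h*(x^4-(9/10)^4) + (x-9/10) + u)*(1-(9/10)*x)
          = (9/10-x)*(1 - (6*β*((9/10)^4+(9/10)^3*x+(9/10)^2*x^2+(9/10)*x^3+x^4)
            + 5*h*((9/10)^3+(9/10)^2*x+(9/10)*x^2+x^3) + 1)*(1-(9/10)*x)) := by
        rw [show (6*β*(x^5-(9/10)^5) + 5*h*(x^4-(9/10)^4) + (x-9/10) + u)*(1-(9/10)*x)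
          = (6*β*(x^5-(9/10)^5) + 5*h*(x^4-(9/10)^4) + (x-9/10))*(1-(9/10)*x) + u*(1-(9/10)*x) by ring,
          hupos]
        ring
      have hpos : 0 < (6*β*(x^5-(9/10)^5) + 5*h*(x^4-(9/10)^4) + (x-9/10) + u)*(1-(9/10)*x) := by
        rw [hmul]
        exact mul_pos (by linarith) (by linarith)
      rcases mul_pos_iff.mp hpos with ⟨h1', _⟩ | ⟨_, h2'⟩
      · exact h1'
      · linarith
    linarith [hT, hlow2, hA2]
  -- Region E : F strictly decreasing on [9/10, 1]
  have regE : StrictAntiOn F (Icc (9/10:ℝ) 1) := by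
    apply strictAntiOn_of_deriv_neg (convex_Icc _ _) hFc.continuousOn
    intro x hx
    rw [interior_Icc] at hx
    obtain ⟨hxa, hxb⟩ := hx
    rw [hderiv1 x ⟨by linarith, by linarith⟩]
    have hax : (0:ℝ) < 1-(9/10)*x := by linarith
    have h10 : (0:ℝ) < 10 - 9*x := by linarith
    have hlx : (0:ℝ) < 1-x := by linarith
    have hpx : (0:ℝ) < 1+x := by linarith
    set u := (x - 9/10)/(1 - (9/10)*x) with hu
    have hu0 : 0 ≤ u := div_nonneg (by linarith) hax.le
    have hu1 : u < 1 := by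
      rw [hu, div_lt_one hax]; linarith
    have hlow := mylog_low u hu0 hu1
    have e1 : (1:ℝ)+u = ((1/10)*(1+x))/(1-(9/10)*x) := by
      rw [hu]; field_simp [h10.ne', show (10:ℝ) - x*9 ≠ 0 by linarith]; ring
    have e2 : (1:ℝ)-u = ((19/10)*(1-x))/(1-(9/10)*x) := by
      rw [hu]; field_simp [h10.ne', show (10:ℝ) - x*9 ≠ 0 by linarith]; ring
    have l1 : Real.log (1+u) = Real.log (1/10) + Real.log (1+x) - Real.log (1-(9/10)*x) := by
      rw [e1, Real.log_div (by positivity) hax.ne', Real.log_mul (by norm_num) hpx.ne']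
    have l2 : Real.log (1-u) = Real.log (19/10) + Real.log (1-x) - Real.log (1-(9/10)*x) := by
      rw [e2, Real.log_div (by positivity) hax.ne', Real.log_mul (by norm_num) hlx.ne']
    have l3 : Real.log ((19:ℝ)/10) - Real.log (1/10) = Real.log 19 := by
      rw [Real.log_div (by norm_num) (by norm_num), Real.log_div (by norm_num) (by norm_num),
        Real.log_one]
      ring
    have hlow2 : 2*u ≤ (Real.log (1+x) - Real.log (1-x)) - Real.log 19 := by
      linarith [hlow, l1, l2, l3, pow_nonneg hu0 3, pow_nonneg hu0 5, pow_nonneg hu0 7,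
        pow_nonneg hu0 9]
    have hupos : u*(1-(9/10)*x) = x - 9/10 := by
      rw [hu]; field_simp [h10.ne', show (10:ℝ) - x*9 ≠ 0 by linarith]
    have hkey := hkeyDE x (by linarith) hxb.le
    have hT : 6*β*(x^5-(9/10)^5) + 5*h*(x^4-(9/10)^4) + (x-9/10) - u < 0 := by
      have hmul : (6*β*(x^5-(9/10)^5) + 5*h*(x^4-(9/10)^4) + (x-9/10) - u)*(1-(9/10)*x)
          = (x-9/10)*((6*β*((9/10)^4+(9/10)^3*x+(9/10)^2*x^2+(9/10)*x^3+x^4)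
            + 5*h*((9/10)^3+(9/10)^2*x+(9/10)*x^2+x^3) + 1)*(1-(9/10)*x) - 1) := by
        rw [show (6*β*(x^5-(9/10)^5) + 5*h*(x^4-(9/10)^4) + (x-9/10) - u)*(1-(9/10)*x)
          = (6*β*(x^5-(9/10)^5) + 5*h*(x^4-(9/10)^4) + (x-9/10))*(1-(9/10)*x) - u*(1-(9/10)*x) by ring,
          hupos]
        ring
      have hneg : (6*β*(x^5-(9/10)^5) + 5*h*(x^4-(9/10)^4) + (x-9/10) - u)*(1-(9/10)*x) < 0 := by
        rw [hmul]
        exact mul_neg_of_pos_of_neg (by linarith) (by linarith)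
      rcases mul_neg_iff.mp hneg with ⟨_, h2'⟩ | ⟨h1', _⟩
      · linarith
      · exact h1'
    linarith [hT, hlow2, hA2]
  -- assemble negativity
  have hneg : ∀ t ∈ Set.Icc (-1 : ℝ) 1, t ≠ 0 → t ≠ 9/10 → F t < 0 := by
    intro t ht ht0 hts
    obtain ⟨htl, htr⟩ := ht
    rcases lt_trichotomy t 0 with hcase | hcase | hcase
    · have := regA ⟨htl, hcase.le⟩ ⟨by norm_num, le_refl 0⟩ hcase
      linarith [hF0, this]
    · exact absurd hcase ht0
    · rcases le_or_gt t (3/5) with hc2 | hc2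
      · have := regB ⟨le_refl 0, by norm_num⟩ ⟨hcase.le, hc2⟩ hcase
        linarith [hF0, this]
      · have hF35 : F (3/5) < 0 := by
          have := regB ⟨le_refl 0, by norm_num⟩ ⟨by norm_num, le_refl _⟩ (by norm_num)
          linarith [hF0, this]
        have hF82 : F (41/50) < 0 := by
          have := regD ⟨le_refl _, by norm_num⟩ ⟨by norm_num, le_refl _⟩ (by norm_num)
          linarith [hF9, this]
        rcases lt_or_ge t (41/50) with hc3 | hc3
        · have hseg : t ∈ segment ℝ (3/5:ℝ) (41/50) := by
            rw [segment_eq_Icc (by norm_num : (3/5:ℝ) ≤ 41/50)]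
            exact ⟨hc2.le, hc3.le⟩
          have := regC.le_on_segment ⟨le_refl _, by norm_num⟩ ⟨by norm_num, le_refl _⟩ hseg
          have hmax : F (3/5) ⊔ F (41/50) < 0 := max_lt hF35 hF82
          linarith [this, hmax]
        · rcases lt_or_ge t (9/10) with hc4 | hc4
          · have := regD ⟨hc3, hc4.le⟩ ⟨by norm_num, le_refl _⟩ hc4
            linarith [hF9, this]
          · have hc5 : 9/10 < t := lt_of_le_of_ne hc4 (fun h' => hts h'.symm)
            have := regE ⟨le_refl _, by norm_num⟩ ⟨hc5.le, htr⟩ hc5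
            linarith [hF9, this]
  exact ⟨hF0, hF9, hneg, hd0, hd20, hd30, hd40, hd9, hd29⟩
end
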